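/- arXiv:1406.7595 — 11 statements merged into one kernel-verified Lean document; each statement's English description precedes it below -/
import Mathlib

section
/- Every nonzero vector in L(G) has squared Euclidean norm at least 4, and a vector in L(G) has squared norm exactly 4 if and only if it has exactly two coordinates equal to 1, two coordinates equal to -1, and all other coordinates zero. -/
open Finset

private lemma count_aux {m : ℕ} (v : Fin m → ℤ)
    (h : ∀ i, v i = 1 ∨ v i = -1 ∨ v i = 0) :
    ∑ i, v i ^ 2 = ((Finset.univ.filter (fun i => v i = 1)).card : ℤ)
        + ((Finset.univ.filter (fun i => v i = -1)).card : ℤ) ∧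
    ∑ i, v i = ((Finset.univ.filter (fun i => v i = 1)).card : ℤ)
        - ((Finset.univ.filter (fun i => v i = -1)).card : ℤ) := by
  have h1 : ∑ i : Fin m, (if v i = 1 then (1:ℤ) else 0)
      = ((Finset.univ.filter (fun i => v i = 1)).card : ℤ) := Finset.sum_boole _ _
  have h2 : ∑ i : Fin m, (if v i = -1 then (1:ℤ) else 0)
      = ((Finset.univ.filter (fun i => v i = -1)).card : ℤ) := Finset.sum_boole _ _
  constructor
  · rw [← h1, ← h2, ← Finset.sum_add_distrib]
    refine Finset.sum_congr rfl fun i _ => ?_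
    rcases h i with hi | hi | hi <;> rw [hi] <;> norm_num
  · rw [← h1, ← h2, ← Finset.sum_sub_distrib]
    refine Finset.sum_congr rfl fun i _ => ?_
    rcases h i with hi | hi | hi <;> rw [hi] <;> norm_num

private lemma tri_aux {m : ℕ} (v : Fin m → ℤ) (hS : ∑ i, v i = 0)
    (h4 : ∑ i, v i ^ 2 ≤ 4) (i : Fin m) : v i = 1 ∨ v i = -1 ∨ v i = 0 := by
  by_contra h
  push_neg at h
  obtain ⟨ha, hb, hc⟩ := h
  have hge : 4 ≤ v i ^ 2 := by
    have : v i ≤ -2 ∨ 2 ≤ v i := by omega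
    rcases this with h' | h' <;> nlinarith
  have hsplit : ∑ j, v j ^ 2 = v i ^ 2 + ∑ j ∈ Finset.univ.erase i, v j ^ 2 :=
    (Finset.add_sum_erase _ _ (Finset.mem_univ i)).symm
  have hz : ∀ j ∈ Finset.univ.erase i, v j ^ 2 = 0 := by
    rw [← Finset.sum_eq_zero_iff_of_nonneg (fun j _ => sq_nonneg (v j))]
    have hnn : 0 ≤ ∑ j ∈ Finset.univ.erase i, v j ^ 2 :=
      Finset.sum_nonneg fun j _ => sq_nonneg (v j)
    omega
  have hvi : ∑ j, v j = v i := by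
    refine Finset.sum_eq_single i (fun j _ hj => ?_) (fun h => (h (Finset.mem_univ i)).elim)
    have := hz j (Finset.mem_erase.2 ⟨hj, Finset.mem_univ j⟩)
    exact pow_eq_zero_iff (by norm_num) |>.mp this
  rw [hS] at hvi
  omega

private lemma group_aux {n : ℕ} {G : Type*} [AddCommGroup G]
    (g : Fin n → G) (hinj : Function.Injective g) (h0 : ∀ i, g i ≠ 0)
    (v : Fin (n + 1) → ℤ)
    (hsum : ∑ i : Fin n, v i.castSucc • g i = 0)
    (i j : Fin (n + 1)) (hij : i ≠ j) (hvi : v i = 1) (hvj : v j = -1)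
    (hrest : ∀ x, x ≠ i → x ≠ j → v x = 0) : False := by
  set G' : Fin (n + 1) → G := Fin.snoc g 0 with hG'
  have hfull : ∑ x, v x • G' x = 0 := by
    rw [Fin.sum_univ_castSucc]
    simp only [hG', Fin.snoc_castSucc, Fin.snoc_last, smul_zero, add_zero]
    exact hsum
  have heq : ∑ x, v x • G' x = v i • G' i + v j • G' j := by
    refine Finset.sum_eq_add i j hij (fun c _ hc => ?_) (fun h => (h (Finset.mem_univ i)).elim)
      (fun h => (h (Finset.mem_univ j)).elim)
    rw [hrest c hc.1 hc.2, zero_smul]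
  rw [hfull, hvi, hvj, one_smul, neg_smul, one_smul] at heq
  have hGG : G' i = G' j := by
    have := heq.symm
    rw [add_neg_eq_zero] at this
    exact this
  rcases Fin.eq_castSucc_or_eq_last i with ⟨i0, rfl⟩ | rfl <;>
    rcases Fin.eq_castSucc_or_eq_last j with ⟨j0, rfl⟩ | rfl
  · simp only [hG', Fin.snoc_castSucc] at hGG
    exact hij (by rw [hinj hGG])
  · simp only [hG', Fin.snoc_castSucc, Fin.snoc_last] at hGG
    exact h0 i0 hGG
  · simp only [hG', Fin.snoc_castSucc, Fin.snoc_last] at hGG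
    exact h0 j0 hGG.symm
  · exact hij rfl

/-- Every nonzero vector of `L(G)` has squared Euclidean norm at least `4`,
and a vector of `L(G)` has squared norm exactly `4` iff it has exactly two coordinates
equal to `1`, two coordinates equal to `-1`, and all other coordinates `0`. -/
theorem minimal_vectors_of_lattice_of_group
    (n : ℕ) (G : Type*) [AddCommGroup G] [Fintype G]
    (g : Fin n → G) (hinj : Function.Injective g) (h0 : ∀ i, g i ≠ 0)
    (hcard : Fintype.card G = n + 1) (hn : 3 ≤ n + 1) :
    ∀ v : Fin (n + 1) → ℤ,
      v (Fin.last n) = -∑ i : Fin n, v i.castSucc →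
      ∑ i : Fin n, v i.castSucc • g i = 0 →
      (v ≠ 0 → 4 ≤ ∑ i, (v i) ^ 2) ∧
      ((∑ i, (v i) ^ 2 = 4) ↔
        ((Finset.univ.filter (fun i => v i = 1)).card = 2 ∧
         (Finset.univ.filter (fun i => v i = -1)).card = 2 ∧
         ∀ i, v i = 1 ∨ v i = -1 ∨ v i = 0)) := by
  intro v hv hsum
  have hS : ∑ i, v i = 0 := by
    rw [Fin.sum_univ_castSucc, hv]
    ring
  have hEven : Even (∑ i, v i ^ 2) := by
    have h1 : Even (∑ i, (v i ^ 2 - v i)) := by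
      apply Finset.even_sum
      intro i _
      have : v i ^ 2 - v i = (v i - 1) * ((v i - 1) + 1) := by ring
      rw [this]
      exact Int.even_mul_succ_self _
    have h2 : ∑ i, (v i ^ 2 - v i) = ∑ i, v i ^ 2 := by
      rw [Finset.sum_sub_distrib, hS, sub_zero]
    rwa [h2] at h1
  constructor
  · intro hne
    have hpos : 0 < ∑ i, v i ^ 2 := by
      obtain ⟨i, hi⟩ := Function.ne_iff.mp hne
      have h1 : v i ^ 2 ≤ ∑ j, v j ^ 2 :=
        Finset.single_le_sum (fun j _ => sq_nonneg (v j)) (Finset.mem_univ i)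
      have h2 : 0 < v i ^ 2 := lt_of_le_of_ne (sq_nonneg _) (Ne.symm (pow_ne_zero 2 hi))
      omega
    by_contra hlt
    have h2 : ∑ i, v i ^ 2 = 2 := by
      obtain ⟨k, hk⟩ := hEven
      omega
    have htri := tri_aux v hS (by omega)
    obtain ⟨hsq, hsum'⟩ := count_aux v htri
    rw [h2] at hsq
    rw [hS] at hsum'
    have hA : (Finset.univ.filter (fun i => v i = 1)).card = 1 := by omega
    have hB : (Finset.univ.filter (fun i => v i = -1)).card = 1 := by omega
    obtain ⟨i, hi⟩ := Finset.card_eq_one.mp hA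
    obtain ⟨j, hj⟩ := Finset.card_eq_one.mp hB
    have hvi : v i = 1 := by
      have : i ∈ Finset.univ.filter (fun i => v i = 1) := by
        rw [hi]; exact Finset.mem_singleton_self i
      exact (Finset.mem_filter.mp this).2
    have hvj : v j = -1 := by
      have : j ∈ Finset.univ.filter (fun i => v i = -1) := by
        rw [hj]; exact Finset.mem_singleton_self j
      exact (Finset.mem_filter.mp this).2
    have hij : i ≠ j := fun h => by rw [h, hvj] at hvi; norm_num at hvi
    refine group_aux g hinj h0 v hsum i j hij hvi hvj fun x hxi hxj => ?_
    rcases htri x with hx | hx | hx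
    · exact absurd (Finset.mem_singleton.mp (hi ▸ Finset.mem_filter.mpr
        ⟨Finset.mem_univ x, hx⟩)) hxi
    · exact absurd (Finset.mem_singleton.mp (hj ▸ Finset.mem_filter.mpr
        ⟨Finset.mem_univ x, hx⟩)) hxj
    · exact hx
  · constructor
    · intro h4
      have htri := tri_aux v hS (by omega)
      obtain ⟨hsq, hsum'⟩ := count_aux v htri
      rw [h4] at hsq
      rw [hS] at hsum'
      exact ⟨by omega, by omega, htri⟩
    · rintro ⟨hA, hB, htri⟩
      obtain ⟨hsq, _⟩ := count_aux v htri
      rw [hA, hB] at hsq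
      norm_num at hsq
      exact hsq
end

section
/- The lattice L(Z_4) is not well-rounded: its minimum squared distance is 4, the set of minimal vectors is exactly {±(1,1,-1,-1), ±(-1,1,1,-1)}, and any three minimal vectors are linearly dependent over Q (the minimal vectors span a 2-dimensional subspace), while L(Z_4) has rank 3. -/
/-- Membership in `L(ℤ_4) = {(x,y,z,-x-y-z) ∈ ℤ⁴ : x + 2y + 3z ≡ 0 (mod 4)}`. -/
def memL4 (v : Fin 4 → ℤ) : Prop :=
  v 3 = -(v 0 + v 1 + v 2) ∧ ((v 0 + 2 * v 1 + 3 * v 2 : ℤ) : ZMod 4) = 0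

lemma eq4' (v : Fin 4 → ℤ) (p q r s : ℤ) :
    v = ![p, q, r, s] ↔ v 0 = p ∧ v 1 = q ∧ v 2 = r ∧ v 3 = s := by
  constructor
  · rintro rfl; exact ⟨rfl, rfl, rfl, rfl⟩
  · rintro ⟨h0, h1, h2, h3⟩; funext i; fin_cases i <;> assumption

lemma minset_eq : ({v : Fin 4 → ℤ | memL4 v ∧ ∑ i, (v i) ^ 2 = 4} =
      {![1, 1, -1, -1], ![-1, -1, 1, 1], ![-1, 1, 1, -1], ![1, -1, -1, 1]}) := by
  ext v
  simp only [Set.mem_setOf_eq, Set.mem_insert_iff, Set.mem_singleton_iff, eq4']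
  constructor
  · rintro ⟨⟨h3, h4⟩, hs⟩
    have hd := (ZMod.intCast_zmod_eq_zero_iff_dvd _ 4).mp h4
    rw [Fin.sum_univ_four, h3] at hs
    have hs' : v 0 * v 0 + v 1 * v 1 + v 2 * v 2 + (v 0 + v 1 + v 2) * (v 0 + v 1 + v 2) = 4 := by
      nlinarith [hs]
    have h0 : -2 ≤ v 0 ∧ v 0 ≤ 2 := by
      constructor <;> nlinarith [sq_nonneg (v 1), sq_nonneg (v 2), sq_nonneg (v 0 + v 1 + v 2)]
    have h1 : -2 ≤ v 1 ∧ v 1 ≤ 2 := by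
      constructor <;> nlinarith [sq_nonneg (v 0), sq_nonneg (v 2), sq_nonneg (v 0 + v 1 + v 2)]
    have h2 : -2 ≤ v 2 ∧ v 2 ≤ 2 := by
      constructor <;> nlinarith [sq_nonneg (v 0), sq_nonneg (v 1), sq_nonneg (v 0 + v 1 + v 2)]
    obtain ⟨h0a, h0b⟩ := h0; obtain ⟨h1a, h1b⟩ := h1; obtain ⟨h2a, h2b⟩ := h2
    clear hs h4
    set a := v 0; set b := v 1; set c := v 2
    interval_cases a <;> interval_cases b <;> interval_cases c <;> omega
  · rintro (⟨h0, h1, h2, h3⟩ | ⟨h0, h1, h2, h3⟩ | ⟨h0, h1, h2, h3⟩ | ⟨h0, h1, h2, h3⟩) <;>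
      refine ⟨⟨by rw [h0, h1, h2, h3]; ring, by rw [h0, h1, h2]; decide⟩,
        by rw [Fin.sum_univ_four, h0, h1, h2, h3]; ring⟩

noncomputable def wq : Fin 4 → ℚ := ![1, 1, -1, -1]
noncomputable def uq : Fin 4 → ℚ := ![-1, 1, 1, -1]

lemma li_wu : LinearIndependent ℚ ![wq, uq] := by
  rw [LinearIndependent.pair_iff]
  intro s t h
  have h0 := congrFun h 0
  have h1 := congrFun h 1
  simp [wq, uq] at h0 h1
  constructor <;> linarith

lemma span_wu_rank : Module.finrank ℚ (Submodule.span ℚ ({wq, uq} : Set (Fin 4 → ℚ))) = 2 := by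
  have : ({wq, uq} : Set (Fin 4 → ℚ)) = Set.range ![wq, uq] := by
    ext x; simp [Matrix.range_cons, Matrix.range_empty]; tauto
  rw [this, finrank_span_eq_card li_wu]
  simp

lemma castA : (fun i => (((![1, 1, -1, -1] : Fin 4 → ℤ)) i : ℚ)) = wq := by
  funext i; fin_cases i <;> norm_num [wq]

lemma castB : (fun i => (((![-1, -1, 1, 1] : Fin 4 → ℤ)) i : ℚ)) = -wq := by
  funext i; fin_cases i <;> norm_num [wq]

lemma castC : (fun i => (((![-1, 1, 1, -1] : Fin 4 → ℤ)) i : ℚ)) = uq := by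
  funext i; fin_cases i <;> norm_num [uq]

lemma castD : (fun i => (((![1, -1, -1, 1] : Fin 4 → ℤ)) i : ℚ)) = -uq := by
  funext i; fin_cases i <;> norm_num [uq]

lemma cast_min_mem (v : Fin 4 → ℤ) (h : memL4 v ∧ ∑ i, (v i) ^ 2 = 4) :
    (fun i => (v i : ℚ)) ∈ Submodule.span ℚ ({wq, uq} : Set (Fin 4 → ℚ)) := by
  have hv : v ∈ ({![1, 1, -1, -1], ![-1, -1, 1, 1], ![-1, 1, 1, -1], ![1, -1, -1, 1]} :
      Set (Fin 4 → ℤ)) := minset_eq ▸ h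
  have hw : wq ∈ Submodule.span ℚ ({wq, uq} : Set (Fin 4 → ℚ)) :=
    Submodule.subset_span (Set.mem_insert _ _)
  have hu : uq ∈ Submodule.span ℚ ({wq, uq} : Set (Fin 4 → ℚ)) :=
    Submodule.subset_span (Set.mem_insert_of_mem _ rfl)
  rcases hv with rfl | rfl | rfl | rfl
  · rw [castA]; exact hw
  · rw [castB]; exact Submodule.neg_mem _ hw
  · rw [castC]; exact hu
  · rw [castD]; exact Submodule.neg_mem _ hu

def bvec : Fin 3 → (Fin 4 → ℤ) := ![![4, 0, 0, -4], ![2, 1, 0, -3], ![1, 0, 1, -2]]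

lemma li_b : LinearIndependent ℤ bvec := by
  rw [Fintype.linearIndependent_iff]
  intro g hg i
  have h0 := congrFun hg 0
  have h1 := congrFun hg 1
  have h2 := congrFun hg 2
  simp [bvec, Fin.sum_univ_three] at h0 h1 h2
  fin_cases i <;> simp <;> omega

lemma span_b_eq : ((Submodule.span ℤ (Set.range bvec) : Submodule ℤ (Fin 4 → ℤ)) :
    Set (Fin 4 → ℤ)) = {v | memL4 v} := by
  apply Set.Subset.antisymm
  · intro v hv
    rw [SetLike.mem_coe, Submodule.mem_span_range_iff_exists_fun] at hv
    obtain ⟨c, rfl⟩ := hv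
    constructor
    · simp [Fin.sum_univ_three, bvec]; ring
    · simp only [Fin.sum_univ_three, bvec]
      push_cast
      simp only [Matrix.cons_val_zero, Matrix.cons_val_one, Matrix.head_cons,
        Matrix.cons_val_two, Matrix.tail_cons, Matrix.cons_val_three, Pi.add_apply,
        Pi.smul_apply, smul_eq_mul]
      push_cast
      have h40 : ((4:ℤ) : ZMod 4) = 0 := rfl
      push_cast at h40
      linear_combination ((c 0 : ZMod 4) + c 1 + c 2) * h40
  · rintro v ⟨h3, h4⟩
    have hd := (ZMod.intCast_zmod_eq_zero_iff_dvd _ 4).mp h4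
    obtain ⟨k, hk⟩ := hd
    have hv : v = (k - v 1 - v 2) • bvec 0 + v 1 • bvec 1 + v 2 • bvec 2 := by
      funext i
      fin_cases i <;> simp [bvec] <;> omega
    rw [hv]
    refine Submodule.add_mem _ (Submodule.add_mem _ ?_ ?_) ?_ <;>
      exact Submodule.smul_mem _ _ (Submodule.subset_span ⟨_, rfl⟩)

/-- `L(ℤ_4)` is not well-rounded: its minimum squared distance is `4`,
the set of minimal vectors is exactly `{±(1,1,-1,-1), ±(-1,1,1,-1)}`, any three
minimal vectors are linearly dependent over `ℚ` (the minimal vectors span a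
2-dimensional subspace), while `L(ℤ_4)` has rank `3`. -/
theorem lattice_Z4_not_well_rounded :
    (∀ v : Fin 4 → ℤ, memL4 v → v ≠ 0 → 4 ≤ ∑ i, (v i) ^ 2) ∧
    ({v : Fin 4 → ℤ | memL4 v ∧ ∑ i, (v i) ^ 2 = 4} =
      {![1, 1, -1, -1], ![-1, -1, 1, 1], ![-1, 1, 1, -1], ![1, -1, -1, 1]}) ∧
    (∀ v₁ v₂ v₃ : Fin 4 → ℤ,
      (memL4 v₁ ∧ ∑ i, (v₁ i) ^ 2 = 4) → (memL4 v₂ ∧ ∑ i, (v₂ i) ^ 2 = 4) →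
      (memL4 v₃ ∧ ∑ i, (v₃ i) ^ 2 = 4) →
      ¬ LinearIndependent ℚ
        ![(fun i => (v₁ i : ℚ)), (fun i => (v₂ i : ℚ)), (fun i => (v₃ i : ℚ))]) ∧
    Module.finrank ℚ (Submodule.span ℚ
      ((fun v : Fin 4 → ℤ => (fun i => (v i : ℚ))) ''
        {v : Fin 4 → ℤ | memL4 v ∧ ∑ i, (v i) ^ 2 = 4})) = 2 ∧
    (∃ L : Submodule ℤ (Fin 4 → ℤ),
      (L : Set (Fin 4 → ℤ)) = {v | memL4 v} ∧ Module.finrank ℤ L = 3) := by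
  refine ⟨?_, minset_eq, ?_, ?_, ?_⟩
  · intro v ⟨h3, h4⟩ hne
    have hd := (ZMod.intCast_zmod_eq_zero_iff_dvd _ 4).mp h4
    rw [Fin.sum_univ_four, h3]
    by_contra hlt
    push_neg at hlt
    have hs' : v 0 * v 0 + v 1 * v 1 + v 2 * v 2 + (v 0 + v 1 + v 2) * (v 0 + v 1 + v 2) < 4 := by
      nlinarith [hlt]
    have hnz : v 0 ≠ 0 ∨ v 1 ≠ 0 ∨ v 2 ≠ 0 := by
      by_contra hz
      push_neg at hz
      apply hne
      funext i
      fin_cases i <;> simp [hz.1, hz.2.1, hz.2.2, h3]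
    have h0 : -1 ≤ v 0 ∧ v 0 ≤ 1 := by
      constructor <;> nlinarith [sq_nonneg (v 1), sq_nonneg (v 2), sq_nonneg (v 0 + v 1 + v 2)]
    have h1 : -1 ≤ v 1 ∧ v 1 ≤ 1 := by
      constructor <;> nlinarith [sq_nonneg (v 0), sq_nonneg (v 2), sq_nonneg (v 0 + v 1 + v 2)]
    have h2 : -1 ≤ v 2 ∧ v 2 ≤ 1 := by
      constructor <;> nlinarith [sq_nonneg (v 0), sq_nonneg (v 1), sq_nonneg (v 0 + v 1 + v 2)]
    obtain ⟨h0a, h0b⟩ := h0; obtain ⟨h1a, h1b⟩ := h1; obtain ⟨h2a, h2b⟩ := h2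
    set a := v 0; set b := v 1; set c := v 2
    interval_cases a <;> interval_cases b <;> interval_cases c <;> omega
  · intro v₁ v₂ v₃ hv1 hv2 hv3 hli
    have hle : Submodule.span ℚ
        (Set.range ![(fun i => (v₁ i : ℚ)), (fun i => (v₂ i : ℚ)), (fun i => (v₃ i : ℚ))]) ≤
        Submodule.span ℚ ({wq, uq} : Set (Fin 4 → ℚ)) := by
      rw [Submodule.span_le]
      rintro x ⟨i, rfl⟩
      fin_cases i
      · exact cast_min_mem _ hv1
      · exact cast_min_mem _ hv2
      · exact cast_min_mem _ hv3
    have hm := Submodule.finrank_mono hle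
    rw [finrank_span_eq_card hli, span_wu_rank] at hm
    simp at hm
  · have himg : (fun v : Fin 4 → ℤ => (fun i => (v i : ℚ))) ''
        {v : Fin 4 → ℤ | memL4 v ∧ ∑ i, (v i) ^ 2 = 4} = {wq, -wq, uq, -uq} := by
      rw [minset_eq, Set.image_insert_eq, Set.image_insert_eq, Set.image_insert_eq,
        Set.image_singleton, castA, castB, castC, castD]
    rw [himg]
    have hsp : Submodule.span ℚ ({wq, -wq, uq, -uq} : Set (Fin 4 → ℚ)) =
        Submodule.span ℚ ({wq, uq} : Set (Fin 4 → ℚ)) := by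
      apply le_antisymm <;> rw [Submodule.span_le]
      · have hw : wq ∈ Submodule.span ℚ ({wq, uq} : Set (Fin 4 → ℚ)) :=
          Submodule.subset_span (Set.mem_insert _ _)
        have hu : uq ∈ Submodule.span ℚ ({wq, uq} : Set (Fin 4 → ℚ)) :=
          Submodule.subset_span (Set.mem_insert_of_mem _ rfl)
        rintro x (rfl | rfl | rfl | rfl)
        · exact hw
        · exact Submodule.neg_mem _ hw
        · exact hu
        · exact Submodule.neg_mem _ hu
      · rintro x (rfl | rfl)
        · exact Submodule.subset_span (Set.mem_insert _ _)
        · exact Submodule.subset_span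
            (Set.mem_insert_of_mem _ (Set.mem_insert_of_mem _ (Set.mem_insert _ _)))
    rw [hsp, span_wu_rank]
  · refine ⟨Submodule.span ℤ (Set.range bvec), span_b_eq, ?_⟩
    rw [Module.finrank_eq_card_basis (Module.Basis.span li_b)]
    simp
end

section
/- Let T̃_m be the m×(m−1) matrix obtained from the tridiagonal Toeplitz matrix T_m (with −2 on the diagonal and 1 on the adjacent diagonals) by appending as last row the vector (1, 0, ..., 0, 1). Then det(T̃_mᵀ T̃_m) = m^3. -/
/-!
Write `A = -T_m` and `v = (1, 0, …, 0, 1)`, so that the rows of `T̃_m` are those of `-A`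
followed by `v`. Then `T̃_mᵀ T̃_m = A² + v vᵀ`, and since `A` is symmetric with row sums
`A 𝟙 = v`, this is `A (I + 𝟙 𝟙ᵀ) A`. The same identity one level down gives
`A = B (I + 𝟙 𝟙ᵀ) Bᵀ` for the unitriangular difference matrix `B` (rows `eᵢ - eᵢ₋₁`), using
`B Bᵀ + e₀ e₀ᵀ = A` and `B 𝟙 = e₀`. By the matrix determinant lemma
`det (I + 𝟙 𝟙ᵀ) = 1 + 𝟙ᵀ𝟙 = m`, hence `det A = m` and `det (T̃_mᵀ T̃_m) = m³`.
-/

open Matrix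

namespace Matrix

theorem mul_one_add_vecMulVec_mul {n R : Type*} [Fintype n] [DecidableEq n] [Semiring R]
    (M P : Matrix n n R) (u w : n → R) :
    M * (1 + vecMulVec u w) * P = M * P + vecMulVec (M *ᵥ u) (w ᵥ* P) := by
  rw [Matrix.mul_add, Matrix.mul_one, Matrix.add_mul, mul_vecMulVec, vecMulVec_mul]

theorem det_one_add_vecMulVec {n R : Type*} [Fintype n] [DecidableEq n] [CommRing R]
    (u w : n → R) : (1 + vecMulVec u w).det = 1 + w ⬝ᵥ u := by
  rw [vecMulVec_eq Unit, det_one_add_replicateCol_mul_replicateRow]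

theorem transpose_mul_self_eq_of_rows {N : ℕ} {R : Type*} [Ring R]
    (T : Matrix (Fin (N + 1)) (Fin N) R) (A : Matrix (Fin N) (Fin N) R) (v : Fin N → R)
    (hT : ∀ k, T k.castSucc = -A k) (hv : T (Fin.last N) = v) :
    Tᵀ * T = Aᵀ * A + vecMulVec v v := by
  ext i j
  simp [mul_apply, Fin.sum_univ_castSucc, hT, hv, vecMulVec_apply]

end Matrix

namespace Fin

theorem sum_ite_val_eq {M : Type*} [AddCommMonoid M] {N : ℕ} (f : Fin N → M) (c : ℕ) :
    (∑ k : Fin N, if (k : ℕ) = c then f k else 0) = if h : c < N then f ⟨c, h⟩ else 0 := by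
  split_ifs with h
  · rw [Finset.sum_eq_single ⟨c, h⟩ (fun k _ hk => if_neg fun hc => hk (Fin.ext hc))
      (by simp)]
    simp
  · exact Finset.sum_eq_zero fun k _ => if_neg fun hc : (k : ℕ) = c => h (hc ▸ k.isLt)

theorem sum_ite_val_add_one_eq {M : Type*} [AddCommMonoid M] {N : ℕ} (f : Fin N → M) (c : ℕ) :
    (∑ k : Fin N, if (k : ℕ) + 1 = c then f k else 0) =
      if h : 0 < c ∧ c - 1 < N then f ⟨c - 1, h.2⟩ else 0 := by
  split_ifs with h
  · rw [Finset.sum_eq_single ⟨c - 1, h.2⟩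
      (fun k _ hk => if_neg fun hc => hk (Fin.ext (by simp; omega))) (by simp)]
    simp only [if_pos (Nat.sub_add_cancel h.1)]
  · exact Finset.sum_eq_zero fun k _ => if_neg fun hc => h ⟨by omega, by omega⟩

end Fin

namespace ExtendedTridiagonal

/-- The matrix `-T_{N+1}`. -/
def secondDiff (N : ℕ) : Matrix (Fin N) (Fin N) ℤ :=
  of fun i j => if (i : ℕ) = j then 2 else if (i : ℕ) = j + 1 ∨ (j : ℕ) = i + 1 then -1 else 0

def forwardDiff (N : ℕ) : Matrix (Fin N) (Fin N) ℤ :=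
  of fun i j => if (i : ℕ) = j then 1 else if (i : ℕ) = j + 1 then -1 else 0

def firstBasisVec (N : ℕ) : Fin N → ℤ := fun i => if (i : ℕ) = 0 then 1 else 0

def boundaryVec (N : ℕ) : Fin N → ℤ :=
  fun i => (if (i : ℕ) = 0 then 1 else 0) + (if (i : ℕ) = N - 1 then 1 else 0)

theorem secondDiff_transpose (N : ℕ) : (secondDiff N)ᵀ = secondDiff N := by
  ext i j
  simp only [secondDiff, transpose_apply, of_apply]
  split_ifs <;> omega

theorem det_forwardDiff (N : ℕ) : (forwardDiff N).det = 1 := by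
  have hlower : (forwardDiff N).IsLowerTriangular := fun i j (hij : i < j) => by
    simp only [forwardDiff, of_apply]
    split_ifs <;> omega
  rw [det_of_isLowerTriangular _ hlower]
  exact Finset.prod_eq_one fun i _ => by simp [forwardDiff]

theorem forwardDiff_mulVec_one (N : ℕ) : forwardDiff N *ᵥ 1 = firstBasisVec N := by
  ext i
  have hsummand : ∀ k : Fin N, forwardDiff N i k =
      (if (k : ℕ) = i then 1 else 0) + (if (k : ℕ) + 1 = i then -1 else 0) := fun k => by
    simp only [forwardDiff, of_apply]; split_ifs <;> omega
  simp only [mulVec, dotProduct, Pi.one_apply, mul_one, hsummand, Finset.sum_add_distrib,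
    Fin.sum_ite_val_eq, Fin.sum_ite_val_add_one_eq, firstBasisVec]
  have := i.isLt
  split_ifs <;> omega

theorem forwardDiff_mul_transpose_add (N : ℕ) :
    forwardDiff N * (forwardDiff N)ᵀ + vecMulVec (firstBasisVec N) (firstBasisVec N) =
      secondDiff N := by
  ext i j
  have hsummand : ∀ k : Fin N, forwardDiff N i k * forwardDiff N j k =
      (if (k : ℕ) = i then forwardDiff N j k else 0) +
        (if (k : ℕ) + 1 = i then -forwardDiff N j k else 0) := fun k => by
    simp only [forwardDiff, of_apply]; split_ifs <;> omega
  simp only [Matrix.add_apply, mul_apply, transpose_apply, hsummand, Finset.sum_add_distrib,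
    Fin.sum_ite_val_eq, Fin.sum_ite_val_add_one_eq, vecMulVec_apply]
  have := i.isLt
  have := j.isLt
  simp only [forwardDiff, secondDiff, firstBasisVec, of_apply]
  split_ifs <;> omega

theorem secondDiff_mulVec_one (N : ℕ) : secondDiff N *ᵥ 1 = boundaryVec N := by
  ext i
  have hsummand : ∀ k : Fin N, secondDiff N i k =
      (if (k : ℕ) = i then 2 else 0) + (if (k : ℕ) + 1 = i then -1 else 0) +
        (if (k : ℕ) = i + 1 then -1 else 0) := fun k => by
    simp only [secondDiff, of_apply]; split_ifs <;> omega
  simp only [mulVec, dotProduct, Pi.one_apply, mul_one, hsummand, Finset.sum_add_distrib,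
    Fin.sum_ite_val_eq, Fin.sum_ite_val_add_one_eq, boundaryVec]
  have := i.isLt
  split_ifs <;> omega

theorem secondDiff_eq_forwardDiff_mul (N : ℕ) :
    secondDiff N = forwardDiff N * (1 + vecMulVec 1 1) * (forwardDiff N)ᵀ := by
  rw [mul_one_add_vecMulVec_mul, vecMul_transpose, forwardDiff_mulVec_one,
    forwardDiff_mul_transpose_add]

theorem det_one_add_vecMulVec_one (N : ℕ) :
    (1 + vecMulVec (1 : Fin N → ℤ) 1).det = N + 1 := by
  rw [det_one_add_vecMulVec, one_dotProduct_one, Fintype.card_fin, add_comm]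

theorem det_secondDiff (N : ℕ) : (secondDiff N).det = N + 1 := by
  rw [secondDiff_eq_forwardDiff_mul, det_mul, det_mul, det_transpose, det_forwardDiff,
    det_one_add_vecMulVec_one, one_mul, mul_one]

end ExtendedTridiagonal

open ExtendedTridiagonal in
/-- Let `T̃_m` be the `m×(m-1)` matrix obtained from the tridiagonal
Toeplitz matrix `T_m` (with `-2` on the diagonal and `1` on the adjacent diagonals)
by appending as last row the vector with `1` in the first and last positions and `0`
elsewhere. Then `det(T̃_mᵀ T̃_m) = m³`. -/
theorem det_gram_extended_tridiagonal (m : ℕ) (hm : 2 ≤ m)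
    (Tt : Matrix (Fin m) (Fin (m - 1)) ℤ)
    (hTt : ∀ (i : Fin m) (j : Fin (m - 1)), Tt i j =
      if (i : ℕ) < m - 1 then
        (if (i : ℕ) = (j : ℕ) then -2
          else if (i : ℕ) = (j : ℕ) + 1 ∨ (j : ℕ) = (i : ℕ) + 1 then 1 else 0)
      else
        ((if (j : ℕ) = 0 then 1 else 0) + (if (j : ℕ) = m - 2 then 1 else 0))) :
    (Tt.transpose * Tt).det = (m : ℤ) ^ 3 := by
  obtain ⟨N, rfl⟩ : ∃ N, m = N + 1 := ⟨m - 1, by omega⟩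
  -- From here on `Fin (N + 1 - 1)` is used as `Fin N`, to which it reduces.
  have hrows (k : Fin N) : Tt k.castSucc = -secondDiff N k := funext fun l => by
    simp only [hTt, Fin.val_castSucc, secondDiff, Pi.neg_apply, of_apply]
    split_ifs <;> omega
  have hlast : Tt (Fin.last N) = boundaryVec N := funext fun l => by
    simp only [hTt, Fin.val_last, boundaryVec]
    split_ifs <;> omega
  have hgram : Ttᵀ * Tt = secondDiff N * (1 + vecMulVec 1 1) * secondDiff N := by
    rw [transpose_mul_self_eq_of_rows Tt _ _ hrows hlast, mul_one_add_vecMulVec_mul,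
      ← mulVec_transpose, secondDiff_transpose, secondDiff_mulVec_one]
  rw [hgram, det_mul, det_mul, det_secondDiff, det_one_add_vecMulVec_one]
  push_cast
  ring
end

section
/- Let C_j be the (m−1)×(m−1) matrix obtained from T̃_m by deleting its j-th row, for 1 ≤ j ≤ m−1. Then det C_j = (−1)^{j−1} m. -/
open Matrix Finset

def fnat (k i j : ℕ) : ℤ :=
  if i < k + 1 then
    (if i = j then -2 else if i = j + 1 ∨ j = i + 1 then 1 else 0)
  else
    ((if j = 0 then 1 else 0) + (if j = k then 1 else 0))

def Ttm (k : ℕ) : Matrix (Fin (k + 2)) (Fin (k + 1)) ℤ := fun i j => fnat k i j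

def bnat (q n : ℕ) : ℤ := if n ≤ q then (q : ℤ) - n + 1 else 0

lemma fnat_dec (k q : ℕ) (hq : q < k + 1) (n : ℕ) (hn : n < k + 2) : fnat k n q =
    (if n = q then (-2 : ℤ) else 0)
    + (if n = q + 1 then (if q + 1 ≤ k then (1 : ℤ) else 0) else 0)
    + (if n = q - 1 then (if q = 0 then (0 : ℤ) else 1) else 0)
    + (if n = k + 1 then ((if q = 0 then (1 : ℤ) else 0)
          + (if q = k then 1 else 0)) else 0) := by
  unfold fnat; split_ifs <;> omega

lemma Ttm_rows_sum (k : ℕ) (q : Fin (k + 1)) : ∑ i : Fin (k + 2), Ttm k i q = 0 := by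
  have hq : (q : ℕ) < k + 1 := q.isLt
  have h1 : ∑ i : Fin (k + 2), Ttm k i q = ∑ n ∈ range (k + 2), fnat k n q :=
    Fin.sum_univ_eq_sum_range (fun n => fnat k n (q : ℕ)) (k + 2)
  rw [h1, Finset.sum_congr rfl fun n hn => fnat_dec k q hq n (mem_range.1 hn)]
  rw [Finset.sum_add_distrib, Finset.sum_add_distrib, Finset.sum_add_distrib,
    Finset.sum_ite_eq' (range (k + 2)), Finset.sum_ite_eq' (range (k + 2)),
    Finset.sum_ite_eq' (range (k + 2)), Finset.sum_ite_eq' (range (k + 2))]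
  simp only [Finset.mem_range]
  split_ifs <;> omega

set_option maxHeartbeats 1000000 in
lemma prod_dec1 (k p q : ℕ) (hp : p < k) (n : ℕ) :
    fnat k (p + 1) n * bnat q n =
      (if n = p then bnat q p else 0)
      + (if n = p + 1 then (-2) * bnat q (p + 1) else 0)
      + (if n = p + 2 then bnat q (p + 2) else 0) := by
  unfold fnat bnat; split_ifs <;> omega

set_option maxHeartbeats 1000000 in
lemma prod_dec2 (k q n : ℕ) :
    fnat k (k + 1) n * bnat q n =
      (if n = 0 then bnat q 0 else 0) + (if n = k then bnat q k else 0) := by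
  unfold fnat bnat; split_ifs <;> omega

set_option maxHeartbeats 1000000 in
lemma key_sum (k p q : ℕ) (hp : p < k + 1) (hq : q < k + 1) :
    ∑ n ∈ range (k + 1), fnat k (p + 1) n * bnat q n =
      if p = k then (q : ℤ) + 1 + (if q = k then 1 else 0)
      else (if p = q then 1 else 0) := by
  rcases Nat.lt_or_ge p k with hpk | hpk
  · rw [Finset.sum_congr rfl fun n _ => prod_dec1 k p q hpk n]
    rw [Finset.sum_add_distrib, Finset.sum_add_distrib,
      Finset.sum_ite_eq' (range (k + 1)), Finset.sum_ite_eq' (range (k + 1)),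
      Finset.sum_ite_eq' (range (k + 1))]
    simp only [Finset.mem_range]
    unfold bnat
    split_ifs <;> omega
  · have hpk' : p = k := by omega
    rw [hpk']
    rw [Finset.sum_congr rfl fun n _ => prod_dec2 k q n]
    rw [Finset.sum_add_distrib,
      Finset.sum_ite_eq' (range (k + 1)), Finset.sum_ite_eq' (range (k + 1))]
    simp only [Finset.mem_range]
    unfold bnat
    split_ifs <;> omega

def Bm (k : ℕ) : Matrix (Fin (k + 1)) (Fin (k + 1)) ℤ := fun p q => bnat q p

def Lm (k : ℕ) : Matrix (Fin (k + 1)) (Fin (k + 1)) ℤ := fun p q =>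
  if (p : ℕ) = k then ((q : ℕ) : ℤ) + 1 + (if (q : ℕ) = k then 1 else 0)
  else (if (p : ℕ) = (q : ℕ) then 1 else 0)

lemma Ttm_mul_Bm (k : ℕ) :
    ((Ttm k).submatrix (Fin.succAbove (0 : Fin (k + 2))) id) * Bm k = Lm k := by
  ext p q
  rw [Matrix.mul_apply]
  have hp1 : ((Fin.succAbove (0 : Fin (k + 2)) p : Fin (k + 2)) : ℕ) = (p : ℕ) + 1 := by
    simp [Fin.succAbove_zero]
  have hrw : ∀ r : Fin (k + 1),
      ((Ttm k).submatrix (Fin.succAbove (0 : Fin (k + 2))) id) p r * Bm k r q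
        = fnat k ((p : ℕ) + 1) (r : ℕ) * bnat (q : ℕ) (r : ℕ) := by
    intro r
    simp only [Matrix.submatrix_apply, id_eq, Ttm, Bm, hp1]
  rw [Finset.sum_congr rfl fun r _ => hrw r,
    Fin.sum_univ_eq_sum_range (fun n => fnat k ((p : ℕ) + 1) n * bnat (q : ℕ) n) (k + 1),
    key_sum k (p : ℕ) (q : ℕ) p.isLt q.isLt]
  rfl

lemma Bm_det (k : ℕ) : (Bm k).det = 1 := by
  rw [Matrix.det_of_upperTriangular (M := Bm k)]
  · exact Finset.prod_eq_one fun i _ => by simp [Bm, bnat]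
  · intro i j hij
    have : (j : ℕ) < (i : ℕ) := hij
    simp only [Bm, bnat]
    rw [if_neg (by omega)]

lemma Lm_det (k : ℕ) : (Lm k).det = (k : ℤ) + 2 := by
  rw [Matrix.det_of_lowerTriangular (Lm k)]
  · rw [Finset.prod_eq_single (Fin.last k)]
    · simp [Lm, Fin.val_last]; ring
    · intro b _ hb
      have hb' : (b : ℕ) ≠ k := fun h => hb (Fin.ext (by rw [Fin.val_last]; exact h))
      simp [Lm, hb']
    · simp
  · intro i j hij
    have h1 : (i : ℕ) < (j : ℕ) := by
      have : i < j := by simpa using hij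
      exact this
    have h2 : (j : ℕ) < k + 1 := j.isLt
    simp only [Lm]
    split_ifs <;> omega

lemma Ttm_base (k : ℕ) :
    ((Ttm k).submatrix (Fin.succAbove (0 : Fin (k + 2))) id).det = (k : ℤ) + 2 := by
  have h := congrArg Matrix.det (Ttm_mul_Bm k)
  rw [Matrix.det_mul, Bm_det, mul_one, Lm_det] at h
  exact h

lemma Ttm_step (k : ℕ) (j : Fin k) :
    ((Ttm k).submatrix (Fin.succAbove (Fin.castSucc j.succ)) id).det
      = - ((Ttm k).submatrix (Fin.succAbove (Fin.castSucc j.castSucc)) id).det := by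
  set a : Fin (k + 2) := Fin.castSucc (Fin.castSucc j) with ha
  set a' : Fin (k + 2) := Fin.castSucc (Fin.succ j) with ha'
  set C : Matrix (Fin (k + 1)) (Fin (k + 1)) ℤ := (Ttm k).submatrix a.succAbove id with hC
  have hav : (a : ℕ) = (j : ℕ) := by simp [ha]
  have hav' : (a' : ℕ) = (j : ℕ) + 1 := by simp [ha']
  set p0 : Fin (k + 1) := Fin.castSucc j with hp0
  have hp0v : (p0 : ℕ) = (j : ℕ) := by simp [hp0]
  have hclaim : (Ttm k).submatrix a'.succAbove id
      = Matrix.updateRow C p0 (∑ p : Fin (k + 1), (-1 : ℤ) • C p) := by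
    ext i q
    rw [Matrix.updateRow_apply]
    by_cases hi : i = p0
    · subst hi
      rw [if_pos rfl]
      have h1 : (∑ p : Fin (k + 1), (-1 : ℤ) • C p) q = -∑ p : Fin (k + 1), C p q := by
        simp [Finset.sum_apply]
      have h2 : ∑ p : Fin (k + 1), C p q = ∑ p : Fin (k + 1), Ttm k (a.succAbove p) q := rfl
      have h3 := Fin.sum_univ_succAbove (fun i => Ttm k i q) a
      rw [Ttm_rows_sum k q] at h3
      have h4 : (∑ p : Fin (k + 1), (-1 : ℤ) • C p) q = Ttm k a q := by
        rw [h1, h2]; linarith [h3]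
      rw [h4]
      have hlt : Fin.castSucc p0 < a' := by
        rw [Fin.lt_def]; simp only [Fin.coe_castSucc, hp0v, hav']; omega
      have h5 : a'.succAbove p0 = a := Fin.succAbove_of_castSucc_lt _ _ hlt
      show Ttm k (a'.succAbove p0) q = Ttm k a q
      rw [h5]
    · rw [if_neg hi]
      have hvi : (i : ℕ) ≠ (j : ℕ) := fun h => hi (Fin.ext (by rw [hp0v]; exact h))
      have h6 : a'.succAbove i = a.succAbove i := by
        rcases Nat.lt_or_ge (i : ℕ) (j : ℕ) with hlt | hge
        · have e1 : Fin.castSucc i < a' := by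
            rw [Fin.lt_def]; simp only [Fin.coe_castSucc, hav']; omega
          have e2 : Fin.castSucc i < a := by
            rw [Fin.lt_def]; simp only [Fin.coe_castSucc, hav]; omega
          rw [Fin.succAbove_of_castSucc_lt _ _ e1, Fin.succAbove_of_castSucc_lt _ _ e2]
        · have e1 : a' ≤ Fin.castSucc i := by
            rw [Fin.le_def]; simp only [Fin.coe_castSucc, hav']; omega
          have e2 : a ≤ Fin.castSucc i := by
            rw [Fin.le_def]; simp only [Fin.coe_castSucc, hav]; omega
          rw [Fin.succAbove_of_le_castSucc _ _ e1, Fin.succAbove_of_le_castSucc _ _ e2]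
      show Ttm k (a'.succAbove i) q = Ttm k (a.succAbove i) q
      rw [h6]
  rw [hclaim, Matrix.det_updateRow_sum C p0 (fun _ => (-1 : ℤ))]
  simp

theorem det_extended_tridiagonal_delete_row' (k : ℕ) :
    ∀ j : Fin (k + 1),
      ((Ttm k).submatrix (Fin.succAbove (Fin.castSucc j)) id).det =
        (-1) ^ (j : ℕ) * (k + 2 : ℤ) := by
  intro j
  induction j using Fin.induction with
  | zero =>
    simpa using Ttm_base k
  | succ i ih =>
    rw [Ttm_step k i, ih]
    simp only [Fin.val_succ, Fin.coe_castSucc]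
    ring

/-- Let `C_j` be the `(m-1)×(m-1)` matrix obtained from `T̃_m` by
deleting its `j`-th row, for `1 ≤ j ≤ m-1`. Then `det C_j = (-1)^{j-1} m`.
Here `m = k + 2` (so `m ≥ 2`), rows deleted are indexed by `j : Fin (m-1)`
(0-indexed, so the sign is `(-1)^(j : ℕ)`). -/
theorem det_extended_tridiagonal_delete_row (k : ℕ)
    (Tt : Matrix (Fin (k + 2)) (Fin (k + 1)) ℤ)
    (hTt : ∀ (i : Fin (k + 2)) (j : Fin (k + 1)), Tt i j =
      if (i : ℕ) < k + 1 then
        (if (i : ℕ) = (j : ℕ) then -2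
          else if (i : ℕ) = (j : ℕ) + 1 ∨ (j : ℕ) = (i : ℕ) + 1 then 1 else 0)
      else
        ((if (j : ℕ) = 0 then 1 else 0) + (if (j : ℕ) = k then 1 else 0))) :
    ∀ j : Fin (k + 1),
      (Tt.submatrix (Fin.succAbove (Fin.castSucc j)) id).det =
        (-1) ^ (j : ℕ) * (k + 2 : ℤ) := by
  have hT : Tt = Ttm k := by
    funext i j
    rw [hTt i j]
    rfl
  subst hT
  exact det_extended_tridiagonal_delete_row' k
end

section
/- The k×k symmetric pentadiagonal Toeplitz matrix R_k with first row (6, −4, 1, 0, ..., 0) has determinant (k+1)(k+2)²(k+3)/12 for every k ≥ 1. -/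
/-!
`R_k` is the leading `k × k` block of the infinite pentadiagonal Toeplitz matrix, so it suffices to
factor the infinite matrix as `L D Lᵀ` with `L` unit lower triangular: `L` has subdiagonals
`-2(m+1)/(m+3)` and `(m+1)(m+2)/((m+3)(m+4))` in column `m`, and `D` has pivots
`d_m = (m+3)(m+4)/((m+1)(m+2))`. Truncating gives `R_k = L_k D_k L_kᵀ`, hence
`det R_k = d_0 ⋯ d_{k-1}`, and this product telescopes to `(k+1)(k+2)²(k+3)/12`.
-/

open Matrix Finset

theorem Matrix.det_mul_diagonal_mul_transpose_of_isLowerTriangular {n R : Type*} [Fintype n]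
    [LinearOrder n] [CommRing R] (L : Matrix n n R) (d : n → R) (hL : L.IsLowerTriangular)
    (hL_diag : ∀ i, L i i = 1) : (L * diagonal d * Lᵀ).det = ∏ i, d i := by
  simp [det_of_isLowerTriangular L hL, hL_diag]

namespace PentadiagonalToeplitz

def entry (i j : ℕ) : ℤ :=
  if i = j then 6
  else if i = j + 1 ∨ j = i + 1 then -4
  else if i = j + 2 ∨ j = i + 2 then 1 else 0

def pivot (m : ℕ) : ℚ := (m + 3) * (m + 4) / ((m + 1) * (m + 2))

def lowerFactor (i j : ℕ) : ℚ :=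
  if i = j then 1
  else if i = j + 1 then -2 * (j + 1) / (j + 3)
  else if i = j + 2 then (j + 1) * (j + 2) / ((j + 3) * (j + 4))
  else 0

theorem lowerFactor_self (j : ℕ) : lowerFactor j j = 1 := by
  simp [lowerFactor]

theorem lowerFactor_add_one_self (j : ℕ) : lowerFactor (j + 1) j = -2 * (j + 1) / (j + 3) := by
  simp [lowerFactor]

theorem lowerFactor_add_two_self (j : ℕ) :
    lowerFactor (j + 2) j = (j + 1) * (j + 2) / ((j + 3) * (j + 4)) := by
  simp [lowerFactor]

theorem lowerFactor_of_lt {i j : ℕ} (h : i < j) : lowerFactor i j = 0 := by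
  simp only [lowerFactor]
  split_ifs <;> first | omega | rfl

theorem lowerFactor_of_add_two_lt {i j : ℕ} (h : j + 2 < i) : lowerFactor i j = 0 := by
  simp only [lowerFactor]
  split_ifs <;> first | omega | rfl

theorem sum_lowerFactor_mul_pivot_mul_lowerFactor (i j : ℕ) :
    ∑ m ∈ range (j + 1), lowerFactor i m * pivot m * lowerFactor j m = entry i j := by
  obtain rfl | rfl | ⟨n, rfl⟩ : j = 0 ∨ j = 1 ∨ ∃ n, j = n + 2 := by
    rcases j with _ | _ | n <;> simp
  · rw [sum_range_one]
    unfold lowerFactor pivot entry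
    split_ifs <;> grind
  · rw [sum_range_succ, sum_range_one]
    unfold lowerFactor pivot entry
    split_ifs <;> grind
  · have hlow : ∑ m ∈ range n, lowerFactor i m * pivot m * lowerFactor (n + 2) m = 0 :=
      sum_eq_zero fun m hm => by
        rw [lowerFactor_of_add_two_lt (i := n + 2) (by simp at hm; omega), mul_zero]
    rw [sum_range_succ, sum_range_succ, sum_range_succ, hlow, zero_add, lowerFactor_self,
      lowerFactor_add_one_self, lowerFactor_add_two_self]
    unfold lowerFactor entry
    split_ifs <;> first | grind | (unfold pivot; push_cast; field_simp; ring)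

theorem prod_pivot (k : ℕ) :
    ∏ m ∈ range k, pivot m = ((k : ℚ) + 1) * ((k : ℚ) + 2) ^ 2 * ((k : ℚ) + 3) / 12 := by
  induction k with
  | zero => norm_num
  | succ k ih =>
    rw [prod_range_succ, ih, pivot]
    push_cast
    field_simp
    ring

end PentadiagonalToeplitz

open PentadiagonalToeplitz

theorem det_pentadiagonal_toeplitz_general (k : ℕ)
    (R : Matrix (Fin k) (Fin k) ℤ)
    (hR : ∀ i j : Fin k, R i j =
      if (i : ℕ) = (j : ℕ) then 6
      else if (i : ℕ) = (j : ℕ) + 1 ∨ (j : ℕ) = (i : ℕ) + 1 then -4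
      else if (i : ℕ) = (j : ℕ) + 2 ∨ (j : ℕ) = (i : ℕ) + 2 then 1 else 0) :
    ((R.det : ℚ)) = ((k : ℚ) + 1) * ((k : ℚ) + 2) ^ 2 * ((k : ℚ) + 3) / 12 := by
  set L : Matrix (Fin k) (Fin k) ℚ := of fun i j => lowerFactor i j
  have hLDL : R.map (Int.cast : ℤ → ℚ) = L * diagonal (fun m : Fin k => pivot m) * Lᵀ := by
    ext i j
    have hRij : R i j = entry i j := hR i j
    rw [map_apply, hRij, mul_apply]
    simp only [mul_diagonal, transpose_apply, L, of_apply]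
    rw [Fin.sum_univ_eq_sum_range (fun m => lowerFactor i m * pivot m * lowerFactor j m),
      ← sum_subset (range_subset_range.2 j.isLt) fun m _ hm => by
        rw [lowerFactor_of_lt (i := j) (by simpa using hm), mul_zero],
      sum_lowerFactor_mul_pivot_mul_lowerFactor]
  rw [Int.cast_det, hLDL, det_mul_diagonal_mul_transpose_of_isLowerTriangular L _
    (fun i j hij => lowerFactor_of_lt hij) fun i => lowerFactor_self i,
    Fin.prod_univ_eq_prod_range (fun m => pivot m), prod_pivot]

/-- The `k×k` symmetric pentadiagonal Toeplitz matrix `R_k` with first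
row `(6, -4, 1, 0, ..., 0)` has determinant `(k+1)(k+2)²(k+3)/12` for every `k ≥ 1`. -/
theorem det_pentadiagonal_toeplitz (k : ℕ) (hk : 1 ≤ k)
    (R : Matrix (Fin k) (Fin k) ℤ)
    (hR : ∀ i j : Fin k, R i j =
      if (i : ℕ) = (j : ℕ) then 6
      else if (i : ℕ) = (j : ℕ) + 1 ∨ (j : ℕ) = (i : ℕ) + 1 then -4
      else if (i : ℕ) = (j : ℕ) + 2 ∨ (j : ℕ) = (i : ℕ) + 2 then 1 else 0) :
    ((R.det : ℚ)) = ((k : ℚ) + 1) * ((k : ℚ) + 2) ^ 2 * ((k : ℚ) + 3) / 12 :=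
  det_pentadiagonal_toeplitz_general k R hR
end

section
/- For n ≥ 2, the n×n matrix Q_n = B_{n+1,n}ᵀ B_{n+1,n} satisfies det Q_n = (n+1)^3, where Q_n equals the pentadiagonal symmetric Toeplitz matrix with diagonal 6, first off-diagonals −4, second off-diagonals 1, modified by adding 1 in the (1,n) and (n,1) corner entries (for n ≥ 4). -/
open Matrix

namespace DetGram13

def tt (k j : ℕ) : ℤ := if k = j then -2 else if k = j + 1 ∨ j = k + 1 then 1 else 0

lemma tt_zero {k j : ℕ} (h1 : k ≠ j) (h2 : k ≠ j + 1) (h3 : k + 1 ≠ j) : tt k j = 0 := by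
  unfold tt; rw [if_neg h1, if_neg (by omega)]

lemma tt_self (j : ℕ) : tt j j = -2 := if_pos rfl

lemma tt_pred {j : ℕ} (h : 1 ≤ j) : tt (j - 1) j = 1 := by
  unfold tt; rw [if_neg (by omega), if_pos (by omega)]

lemma tt_succ (j : ℕ) : tt (j + 1) j = 1 := by
  unfold tt; rw [if_neg (by omega), if_pos (by omega)]

lemma tt_eq2 {x y : ℕ} (h : x = y) : tt x y = -2 := by rw [h, tt_self]

lemma tt_eq1 {x y : ℕ} (h : x = y + 1 ∨ y = x + 1) : tt x y = 1 := by
  unfold tt; rw [if_neg (by omega), if_pos h]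

lemma window (n j : ℕ) (hj : j < n) (f : ℕ → ℤ)
    (hf : ∀ k, k ≠ j → k ≠ j + 1 → k + 1 ≠ j → f k = 0) :
    ∑ k ∈ Finset.range n, f k =
      (if 1 ≤ j then f (j - 1) else 0) + f j + (if j + 1 < n then f (j + 1) else 0) := by
  have h1 : ∀ k ∈ Finset.range n, f k =
      (if k + 1 = j then f (j - 1) else 0) + (if k = j then f j else 0) +
        (if k = j + 1 then f (j + 1) else 0) := by
    intro k _
    by_cases h : k + 1 = j
    · rw [if_pos h, if_neg (by omega), if_neg (by omega), show j - 1 = k by omega]; ring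
    · by_cases h2 : k = j
      · subst h2; rw [if_neg h, if_pos rfl, if_neg (by omega)]; ring
      · by_cases h3 : k = j + 1
        · subst h3; rw [if_neg h, if_neg h2, if_pos rfl]; ring
        · rw [if_neg h, if_neg h2, if_neg h3, hf k h2 h3 h]; ring
  rw [Finset.sum_congr rfl h1, Finset.sum_add_distrib, Finset.sum_add_distrib,
    Finset.sum_ite_eq' (Finset.range n) j (fun _ => f j),
    Finset.sum_ite_eq' (Finset.range n) (j + 1) (fun _ => f (j + 1)),
    if_pos (Finset.mem_range.2 hj)]
  congr 2
  · by_cases h : 1 ≤ j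
    · have h2 : ∀ k ∈ Finset.range n, (if k + 1 = j then f (j - 1) else 0)
          = (if k = j - 1 then f (j - 1) else 0) := by
        intro k _; exact if_congr (by omega) rfl rfl
      rw [Finset.sum_congr rfl h2, Finset.sum_ite_eq' (Finset.range n) (j - 1) (fun _ => f (j - 1)),
        if_pos (Finset.mem_range.2 (by omega)), if_pos h]
    · rw [if_neg h, Finset.sum_eq_zero]; intro k _; rw [if_neg (by omega)]
  · simp [Finset.mem_range]

def Tm (n : ℕ) : Matrix (Fin n) (Fin n) ℤ := fun i j => tt i j
def Um (n : ℕ) : Matrix (Fin n) (Fin n) ℤ := fun i j => if (j : ℕ) ≤ (i : ℕ) then ((j : ℕ) : ℤ) + 1 else 0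
def Vm (n : ℕ) : Matrix (Fin n) (Fin n) ℤ := fun i j =>
  if (i : ℕ) = (j : ℕ) then -(((i : ℕ) : ℤ) + 2)
  else if (j : ℕ) = (i : ℕ) + 1 then ((i : ℕ) : ℤ) + 1 else 0
def Cm (n : ℕ) : Matrix (Fin (n + 1)) (Fin n) ℤ := fun i j =>
  if (i : ℕ) = (j : ℕ) then 1 else if (i : ℕ) = n then -1 else 0

set_option maxHeartbeats 2000000 in
lemma hUT (n : ℕ) : Um n * Tm n = Vm n := by
  ext i j
  rw [Matrix.mul_apply]
  have h : ∀ k : Fin n, Um n i k * Tm n k j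
      = (fun m : ℕ => (if m ≤ (i : ℕ) then (m : ℤ) + 1 else 0) * tt m (j : ℕ)) (k : ℕ) := by
    intro k; rfl
  rw [Finset.sum_congr rfl (fun k _ => h k),
    Fin.sum_univ_eq_sum_range (fun m : ℕ => (if m ≤ (i : ℕ) then (m : ℤ) + 1 else 0) * tt m (j : ℕ)) n,
    window n j j.isLt _ (fun k h1 h2 h3 => by rw [tt_zero h1 h2 h3, mul_zero])]
  have hi := i.isLt
  have hj := j.isLt
  unfold tt Vm
  split_ifs <;> push_cast <;> omega

set_option maxHeartbeats 1000000 in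
lemma hBC (n : ℕ) (hn : 2 ≤ n) (B : Matrix (Fin (n + 1)) (Fin n) ℤ)
    (hB : ∀ (i : Fin (n + 1)) (j : Fin n), B i j =
      if (i : ℕ) < n then
        (if (i : ℕ) = (j : ℕ) then -2
          else if (i : ℕ) = (j : ℕ) + 1 ∨ (j : ℕ) = (i : ℕ) + 1 then 1 else 0)
      else
        ((if (j : ℕ) = 0 then 1 else 0) + (if (j : ℕ) = n - 1 then 1 else 0))) :
    B = Cm n * Tm n := by
  ext i j
  rw [Matrix.mul_apply, hB]
  have hrw : ∀ k : Fin n, Cm n i k * Tm n k j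
      = (fun m : ℕ => (if (i : ℕ) = m then 1 else if (i : ℕ) = n then -1 else 0) * tt m (j : ℕ)) (k : ℕ) := by
    intro k; rfl
  rw [Finset.sum_congr rfl (fun k _ => hrw k),
    Fin.sum_univ_eq_sum_range (fun m : ℕ => (if (i : ℕ) = m then 1 else if (i : ℕ) = n then -1 else 0) * tt m (j : ℕ)) n,
    window n j j.isLt _ (fun k h1 h2 h3 => by rw [tt_zero h1 h2 h3, mul_zero])]
  have hi := i.isLt
  have hj := j.isLt
  by_cases hj1 : 1 ≤ (j : ℕ)
  · simp only [if_pos hj1, tt_pred hj1, tt_self, tt_succ, mul_one]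
    by_cases hj2 : (j : ℕ) + 1 < n
    · simp only [if_pos hj2, tt_succ, mul_one]
      split_ifs <;> omega
    · simp only [if_neg hj2]
      split_ifs <;> omega
  · simp only [if_neg hj1, tt_self, tt_succ, mul_one]
    by_cases hj2 : (j : ℕ) + 1 < n
    · simp only [if_pos hj2, tt_succ, mul_one]
      split_ifs <;> omega
    · simp only [if_neg hj2]
      split_ifs <;> omega

lemma hCC (n : ℕ) : (Cm n)ᵀ * Cm n
    = (1 : Matrix (Fin n) (Fin n) ℤ)
      + Matrix.replicateCol Unit (fun _ : Fin n => (1 : ℤ)) * Matrix.replicateRow Unit (fun _ : Fin n => (1 : ℤ)) := by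
  ext j k
  have hj := j.isLt
  have hk := k.isLt
  rw [Matrix.mul_apply, Fin.sum_univ_castSucc]
  simp only [Matrix.transpose_apply]
  have h1 : ∀ i : Fin n, Cm n i.castSucc j * Cm n i.castSucc k
      = (fun m : ℕ => if m = (j : ℕ) then (if (j : ℕ) = (k : ℕ) then (1 : ℤ) else 0) else 0) (i : ℕ) := by
    intro i
    have hi := i.isLt
    simp only [Cm, Fin.coe_castSucc]
    split_ifs <;> omega
  have h2 : Cm n (Fin.last n) j * Cm n (Fin.last n) k = 1 := by
    simp only [Cm, Fin.val_last]
    rw [if_neg (show ¬ n = (j : ℕ) by omega), if_neg (show ¬ n = (k : ℕ) by omega)]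
    norm_num
  rw [Finset.sum_congr rfl (fun i _ => h1 i),
    Fin.sum_univ_eq_sum_range (fun m : ℕ => if m = (j : ℕ) then (if (j : ℕ) = (k : ℕ) then (1 : ℤ) else 0) else 0) n,
    Finset.sum_ite_eq' (Finset.range n) (j : ℕ) (fun _ => if (j : ℕ) = (k : ℕ) then (1 : ℤ) else 0),
    if_pos (Finset.mem_range.2 hj), h2]
  simp [Matrix.one_apply, Matrix.mul_apply, Fin.ext_iff]

lemma prodrel (m : ℕ) : (∏ i : Fin m, (((i : ℕ) : ℤ) + 2))
    = ((m : ℤ) + 1) * ∏ i : Fin m, (((i : ℕ) : ℤ) + 1) := by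
  induction m with
  | zero => simp
  | succ m ih =>
    rw [Fin.prod_univ_castSucc, Fin.prod_univ_castSucc]
    simp only [Fin.coe_castSucc, Fin.val_last]
    rw [ih]
    push_cast
    ring

lemma prodpos (m : ℕ) : 0 < ∏ i : Fin m, (((i : ℕ) : ℤ) + 1) :=
  Finset.prod_pos (fun i _ => by positivity)

lemma detU (n : ℕ) : (Um n).det = ∏ i : Fin n, (((i : ℕ) : ℤ) + 1) := by
  rw [Matrix.det_of_lowerTriangular (Um n) (fun i j h => by
    have : (i : ℕ) < (j : ℕ) := (OrderDual.toDual_lt_toDual.mp h)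
    exact if_neg (by omega))]
  exact Finset.prod_congr rfl (fun i _ => if_pos le_rfl)

lemma detV (n : ℕ) : (Vm n).det = ∏ i : Fin n, -(((i : ℕ) : ℤ) + 2) := by
  rw [Matrix.det_of_upperTriangular (show (Vm n).BlockTriangular id from fun i j h => by
    have : (j : ℕ) < (i : ℕ) := h
    unfold Vm
    rw [if_neg (by omega), if_neg (by omega)])]
  exact Finset.prod_congr rfl (fun i _ => if_pos rfl)

lemma detT_sq (n : ℕ) : (Tm n).det ^ 2 = ((n : ℤ) + 1) ^ 2 := by
  have h1 : (Um n).det * (Tm n).det = (Vm n).det := by rw [← Matrix.det_mul, hUT]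
  have h2 : ((Um n).det * (Tm n).det) ^ 2 = ((Vm n).det) ^ 2 := by rw [h1]
  rw [detU, detV, mul_pow] at h2
  have h3 : (∏ i : Fin n, -(((i : ℕ) : ℤ) + 2)) ^ 2
      = (((n : ℤ) + 1) * ∏ i : Fin n, (((i : ℕ) : ℤ) + 1)) ^ 2 := by
    rw [← Finset.prod_pow]
    simp_rw [neg_sq]
    rw [Finset.prod_pow, prodrel]
  rw [h3] at h2
  have hP := prodpos n
  exact mul_left_cancel₀ (pow_ne_zero 2 (ne_of_gt hP))
    (show (∏ i : Fin n, (((i : ℕ) : ℤ) + 1)) ^ 2 * (Tm n).det ^ 2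
        = (∏ i : Fin n, (((i : ℕ) : ℤ) + 1)) ^ 2 * ((n : ℤ) + 1) ^ 2 by
      ring_nf; ring_nf at h2; linarith)

set_option maxHeartbeats 3000000 in
lemma keylem (n a b : ℕ) (h4 : 4 ≤ n) (ha : a < n) (hb : b < n) :
    ((if 1 ≤ b then tt (b - 1) a * tt (b - 1) b else 0) + tt b a * tt b b +
      (if b + 1 < n then tt (b + 1) a * tt (b + 1) b else 0)) +
      ((if a = 0 then 1 else 0) + (if a = n - 1 then 1 else 0)) *
        ((if b = 0 then 1 else 0) + (if b = n - 1 then 1 else 0)) =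
    (if a = b then 6
      else if a = b + 1 ∨ b = a + 1 then -4
      else if a = b + 2 ∨ b = a + 2 then 1 else 0) +
    (if (a = 0 ∧ b = n - 1) ∨ (a = n - 1 ∧ b = 0) then 1 else 0) := by
  rcases (by omega : a = b ∨ a = b + 1 ∨ b = a + 1 ∨ a = b + 2 ∨ b = a + 2 ∨
      (b + 3 ≤ a ∨ a + 3 ≤ b)) with hr | hr | hr | hr | hr | hr
  · rw [tt_self, tt_succ, tt_eq2 (x := b) (y := a) (by omega),
      tt_eq1 (x := b + 1) (y := a) (by omega)]
    by_cases hj1 : 1 ≤ b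
    · rw [if_pos hj1, tt_pred hj1, tt_eq1 (x := b - 1) (y := a) (by omega)]
      split_ifs <;> omega
    · rw [if_neg hj1]
      split_ifs <;> omega
  · rw [tt_self, tt_succ, tt_eq1 (x := b) (y := a) (by omega),
      tt_eq2 (x := b + 1) (y := a) (by omega)]
    by_cases hj1 : 1 ≤ b
    · rw [if_pos hj1, tt_pred hj1, tt_zero (k := b - 1) (j := a) (by omega) (by omega) (by omega)]
      split_ifs <;> omega
    · rw [if_neg hj1]
      split_ifs <;> omega
  · rw [tt_self, tt_succ, tt_eq1 (x := b) (y := a) (by omega),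
      tt_zero (k := b + 1) (j := a) (by omega) (by omega) (by omega),
      if_pos (show 1 ≤ b by omega), tt_pred (show 1 ≤ b by omega),
      tt_eq2 (x := b - 1) (y := a) (by omega)]
    split_ifs <;> omega
  · rw [tt_self, tt_succ, tt_zero (k := b) (j := a) (by omega) (by omega) (by omega),
      tt_eq1 (x := b + 1) (y := a) (by omega)]
    by_cases hj1 : 1 ≤ b
    · rw [if_pos hj1, tt_pred hj1, tt_zero (k := b - 1) (j := a) (by omega) (by omega) (by omega)]
      split_ifs <;> omega
    · rw [if_neg hj1]
      split_ifs <;> omega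
  · rw [tt_self, tt_succ, tt_zero (k := b) (j := a) (by omega) (by omega) (by omega),
      tt_zero (k := b + 1) (j := a) (by omega) (by omega) (by omega),
      if_pos (show 1 ≤ b by omega), tt_pred (show 1 ≤ b by omega),
      tt_eq1 (x := b - 1) (y := a) (by omega)]
    split_ifs <;> omega
  · rw [tt_self, tt_succ, tt_zero (k := b) (j := a) (by omega) (by omega) (by omega),
      tt_zero (k := b + 1) (j := a) (by omega) (by omega) (by omega)]
    by_cases hj1 : 1 ≤ b
    · rw [if_pos hj1, tt_pred hj1, tt_zero (k := b - 1) (j := a) (by omega) (by omega) (by omega)]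
      split_ifs <;> omega
    · rw [if_neg hj1]
      split_ifs <;> omega

end DetGram13

open DetGram13 in


/-- For `n ≥ 2`, the `n×n` Gram matrix `Q_n = B_{n+1,n}ᵀ B_{n+1,n}`
satisfies `det Q_n = (n+1)³`, and (for `n ≥ 4`) `Q_n` equals the pentadiagonal
symmetric Toeplitz matrix with diagonal `6`, first off-diagonals `-4`, second
off-diagonals `1`, modified by adding `1` in the `(1,n)` and `(n,1)` corner entries. -/
theorem det_gram_of_basis_matrix (n : ℕ) (hn : 2 ≤ n)
    (B : Matrix (Fin (n + 1)) (Fin n) ℤ)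
    (hB : ∀ (i : Fin (n + 1)) (j : Fin n), B i j =
      if (i : ℕ) < n then
        (if (i : ℕ) = (j : ℕ) then -2
          else if (i : ℕ) = (j : ℕ) + 1 ∨ (j : ℕ) = (i : ℕ) + 1 then 1 else 0)
      else
        ((if (j : ℕ) = 0 then 1 else 0) + (if (j : ℕ) = n - 1 then 1 else 0))) :
    (B.transpose * B).det = ((n : ℤ) + 1) ^ 3 ∧
    (4 ≤ n → ∀ i j : Fin n, (B.transpose * B) i j =
      (if (i : ℕ) = (j : ℕ) then 6
        else if (i : ℕ) = (j : ℕ) + 1 ∨ (j : ℕ) = (i : ℕ) + 1 then -4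
        else if (i : ℕ) = (j : ℕ) + 2 ∨ (j : ℕ) = (i : ℕ) + 2 then 1 else 0) +
      (if ((i : ℕ) = 0 ∧ (j : ℕ) = n - 1) ∨ ((i : ℕ) = n - 1 ∧ (j : ℕ) = 0)
        then 1 else 0)) := by
  constructor
  · have hb := hBC n hn B hB
    have e1 : B.transpose * B = (Tm n)ᵀ * (((Cm n)ᵀ * Cm n) * Tm n) := by
      rw [hb, Matrix.transpose_mul, Matrix.mul_assoc,
        ← Matrix.mul_assoc ((Cm n)ᵀ) (Cm n) (Tm n)]
    rw [e1, Matrix.det_mul, Matrix.det_mul, Matrix.det_transpose, hCC n,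
      Matrix.det_one_add_replicateCol_mul_replicateRow]
    have hdot : (fun _ : Fin n => (1 : ℤ)) ⬝ᵥ (fun _ : Fin n => (1 : ℤ)) = (n : ℤ) := by
      simp [dotProduct]
    rw [hdot]
    have h := detT_sq n
    linear_combination ((n : ℤ) + 1) * h
  · intro h4 i j
    have hi := i.isLt
    have hj := j.isLt
    rw [Matrix.mul_apply]
    simp only [Matrix.transpose_apply]
    rw [Fin.sum_univ_castSucc]
    have h1 : ∀ k : Fin n, B k.castSucc i * B k.castSucc j
        = (fun m : ℕ => tt m (i : ℕ) * tt m (j : ℕ)) (k : ℕ) := by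
      intro k
      rw [hB, hB]
      simp only [Fin.coe_castSucc]
      rw [if_pos k.isLt, if_pos k.isLt]
      rfl
    rw [Finset.sum_congr rfl (fun k _ => h1 k),
      Fin.sum_univ_eq_sum_range (fun m : ℕ => tt m (i : ℕ) * tt m (j : ℕ)) n,
      window n j hj _ (fun k a b c => by rw [tt_zero a b c, mul_zero]),
      hB, hB]
    simp only [Fin.val_last, lt_irrefl, if_false]
    exact keylem n i j h4 hi hj
end

section
/- For every n ≥ 2, the covering radius μ of the Barnes lattice L(Z_{n+1}) satisfies μ² < (1/4)(n + 4·log(n−1) + 7 − 4·log 2 + 10/n). -/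
open Finset in
lemma exists_top {m : ℕ} (f : Fin m → ℝ) (s : ℕ) (hs : s ≤ m) :
    ∃ S : Finset (Fin m), S.card = s ∧ ∀ i ∈ S, ∀ j ∉ S, f j ≤ f i := by
  induction s with
  | zero => exact ⟨∅, rfl, by simp⟩
  | succ s ih =>
    obtain ⟨S, hcard, hprop⟩ := ih (Nat.le_of_succ_le hs)
    have hne : Sᶜ.Nonempty := by
      rw [← Finset.card_pos, Finset.card_compl, hcard, Fintype.card_fin]
      omega
    obtain ⟨a, haS, hamax⟩ := Finset.exists_max_image Sᶜ f hne
    have haS' : a ∉ S := Finset.mem_compl.mp haS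
    refine ⟨insert a S, by rw [Finset.card_insert_of_notMem haS', hcard], ?_⟩
    intro i hi j hj
    have hjS : j ∉ S := fun h => hj (Finset.mem_insert_of_mem h)
    rcases Finset.mem_insert.mp hi with h | h
    · subst h; exact hamax j (Finset.mem_compl.mpr hjS)
    · exact hprop i h j hjS

lemma cover (n : ℕ) (ξ : Fin (n+1) → ℝ) (hξ : ∑ i, ξ i = 0) :
    ∃ x : Fin (n+1) → ℤ, (∑ i, x i = 0) ∧
      ∑ i, (ξ i - (x i : ℝ))^2 ≤ ((n:ℝ)+1)/4 := by
  set f : Fin (n+1) → ℝ := fun i => Int.fract (ξ i) with hfdef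
  set y : Fin (n+1) → ℤ := fun i => ⌊ξ i⌋ with hydef
  have hf0 : ∀ i, 0 ≤ f i := fun i => Int.fract_nonneg _
  have hf1 : ∀ i, f i < 1 := fun i => Int.fract_lt_one _
  have hsumf : ∑ i, f i = -((∑ i, y i : ℤ) : ℝ) := by
    push_cast
    simp only [hfdef, Int.fract]
    rw [Finset.sum_sub_distrib, hξ]
    ring
  have hsumf0 : 0 ≤ ∑ i, f i := Finset.sum_nonneg fun i _ => hf0 i
  have hynn : 0 ≤ -(∑ i, y i) := by
    have h := hsumf0
    rw [hsumf] at h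
    exact_mod_cast h
  set s : ℕ := (-(∑ i, y i)).toNat with hsdef
  have hscast : (s : ℝ) = ∑ i, f i := by
    have h1 : ((s:ℤ) : ℝ) = -((∑ i, y i : ℤ) : ℝ) := by
      rw [hsdef, Int.toNat_of_nonneg hynn]; push_cast; ring
    rw [hsumf]; exact_mod_cast h1
  have hslt : (s:ℝ) < (n:ℝ)+1 := by
    rw [hscast]
    calc ∑ i, f i < ∑ _i : Fin (n+1), (1:ℝ) :=
          Finset.sum_lt_sum_of_nonempty Finset.univ_nonempty fun i _ => hf1 i
      _ = (n:ℝ)+1 := by simp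
  have hsle : s ≤ n+1 := by
    have : (s:ℝ) < ((n+1:ℕ):ℝ) := by push_cast; linarith
    exact le_of_lt (by exact_mod_cast this)
  obtain ⟨S, hScard, hSprop⟩ := exists_top f s (by simpa using hsle)
  refine ⟨fun i => y i + (if i ∈ S then 1 else 0), ?_, ?_⟩
  · have hsy : ∑ i, y i = -(s:ℤ) := by omega
    rw [Finset.sum_add_distrib, hsy]
    have : ∑ i : Fin (n+1), (if i ∈ S then (1:ℤ) else 0) = S.card := by
      simp [Finset.sum_ite_mem]
    rw [this, hScard]
    ring
  · have herr : ∀ i, ξ i - ((y i + (if i ∈ S then 1 else 0) : ℤ) : ℝ)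
        = f i - (if i ∈ S then 1 else 0) := by
      intro i
      have hy : (y i : ℝ) = ξ i - f i := by
        simp only [hfdef, hydef, Int.fract]; ring
      by_cases h : i ∈ S
      · rw [if_pos h, if_pos h]; push_cast [hy]; ring
      · rw [if_neg h, if_neg h]; push_cast [hy]; ring
    rcases S.eq_empty_or_nonempty with hE | hNE
    · have hs0 : (s:ℝ) = 0 := by rw [← hScard, hE]; simp
      have hfz : ∀ i ∈ Finset.univ, f i = 0 := by
        have hsum0 : ∑ i, f i = 0 := by rw [← hscast, hs0]
        exact (Finset.sum_eq_zero_iff_of_nonneg fun i _ => hf0 i).mp hsum0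
      calc ∑ i, (ξ i - ((y i + (if i ∈ S then 1 else 0) : ℤ) : ℝ))^2
          = ∑ i : Fin (n+1), (0:ℝ) := by
            apply Finset.sum_congr rfl
            intro i hi
            rw [herr i, hE]
            simp [hfz i hi]
        _ ≤ ((n:ℝ)+1)/4 := by simp; positivity
    · obtain ⟨i₀, hi₀, hmin⟩ := Finset.exists_min_image S f hNE
      set t : ℝ := f i₀ with htdef
      have ht0 : 0 ≤ t := hf0 i₀
      have ht1 : t ≤ 1 := le_of_lt (hf1 i₀)
      set A : ℝ := ∑ i ∈ Sᶜ, f i with hAdef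
      set B : ℝ := ∑ i ∈ S, (1 - f i) with hBdef
      have hsplit : ∑ i ∈ S, f i + ∑ i ∈ Sᶜ, f i = (s:ℝ) := by
        rw [hscast, Finset.sum_add_sum_compl]
      have hAB : A = B := by
        rw [hAdef, hBdef, Finset.sum_sub_distrib]
        simp only [Finset.sum_const, nsmul_eq_mul, mul_one, hScard]
        linarith [hsplit]
      have hcompl : ∀ j ∈ Sᶜ, f j ≤ t := by
        intro j hj
        exact hSprop i₀ hi₀ j (Finset.mem_compl.mp hj)
      have hA0 : 0 ≤ A := Finset.sum_nonneg fun i _ => hf0 i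
      have hAle : A ≤ ((n:ℝ)+1-(s:ℝ)) * t := by
        calc A ≤ ∑ _j ∈ Sᶜ, t := Finset.sum_le_sum hcompl
          _ = ((n:ℝ)+1-(s:ℝ)) * t := by
            rw [Finset.sum_const, nsmul_eq_mul, Finset.card_compl, hScard, Fintype.card_fin]
            congr 1
            push_cast [Nat.cast_sub hsle]
            ring
      have hBle : B ≤ (s:ℝ) * (1 - t) := by
        calc B ≤ ∑ _i ∈ S, (1 - t) := by
              apply Finset.sum_le_sum
              intro i hi
              linarith [hmin i hi]
          _ = (s:ℝ) * (1-t) := by rw [Finset.sum_const, nsmul_eq_mul, hScard]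
      have hAbound : A ≤ ((n:ℝ)+1)/4 := by
        have hs0 : (0:ℝ) ≤ (s:ℝ) := Nat.cast_nonneg s
        nlinarith [sq_nonneg (A - ((n:ℝ)+1)/4), sq_nonneg (2*(s:ℝ) - ((n:ℝ)+1)),
          sq_nonneg (2*t-1), mul_nonneg hA0 hA0]
      -- now bound the cost by A
      have hcost : ∑ i, (ξ i - ((y i + (if i ∈ S then 1 else 0) : ℤ) : ℝ))^2 ≤ A := by
        have hsum2 : ∑ i, (ξ i - ((y i + (if i ∈ S then 1 else 0) : ℤ) : ℝ))^2
            = ∑ i ∈ S, (f i - 1)^2 + ∑ i ∈ Sᶜ, (f i)^2 := by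
          rw [← Finset.sum_add_sum_compl S]
          congr 1
          · apply Finset.sum_congr rfl; intro i hi; rw [herr i]; simp [hi]
          · apply Finset.sum_congr rfl; intro i hi
            rw [herr i]; simp [Finset.mem_compl.mp hi]
        rw [hsum2]
        have h1 : ∑ i ∈ S, (f i - 1)^2 ≤ (1-t) * B := by
          rw [hBdef, Finset.mul_sum]
          apply Finset.sum_le_sum
          intro i hi
          have := hmin i hi
          have := hf1 i
          nlinarith
        have h2 : ∑ i ∈ Sᶜ, (f i)^2 ≤ t * A := by
          rw [hAdef, Finset.mul_sum]
          apply Finset.sum_le_sum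
          intro i hi
          have := hcompl i hi
          have := hf0 i
          nlinarith
        have : (1-t)*B + t*A = A := by rw [← hAB]; ring
        linarith
      linarith

open Finset in

lemma numbound (n : ℕ) (hn : 2 ≤ n) :
    ((n:ℝ)+1)/4 + 2 < (1 / 4) * ((n : ℝ) + 4 * Real.log ((n : ℝ) - 1) + 7 -
        4 * Real.log 2 + 10 / (n : ℝ)) := by
  have h2 : Real.log 2 < 0.6931471808 := Real.log_two_lt_d9
  have h2' : (0.6931471803:ℝ) < Real.log 2 := Real.log_two_gt_d9
  rcases show n = 2 ∨ n = 3 ∨ n = 4 ∨ 5 ≤ n by omega with h|h|h|h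
  · subst h
    norm_num [Real.log_one]
    linarith
  · subst h
    norm_num
    linarith
  · subst h
    have h32 : Real.log 2 ≤ Real.log 3 := Real.log_le_log (by norm_num) (by norm_num)
    norm_num
    linarith
  · have hn5 : (5:ℝ) ≤ (n:ℝ) := by exact_mod_cast h
    have hl4 : Real.log 4 ≤ Real.log ((n:ℝ)-1) :=
      Real.log_le_log (by norm_num) (by linarith)
    have hl42 : Real.log 4 = 2 * Real.log 2 := by
      rw [show (4:ℝ) = 2^2 by norm_num, Real.log_pow]; push_cast; ring
    have hpos : (0:ℝ) < 10 / (n:ℝ) := by positivity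
    rw [div_add' _ _ _ (by norm_num : (4:ℝ) ≠ 0)]
    rw [div_lt_iff₀ (by norm_num : (0:ℝ) < 4)] at *
    nlinarith

/-- For every `n ≥ 2`, the covering radius `μ` of the Barnes lattice
`L(ℤ_{n+1}) = {(x_1,...,x_n,-Σx_i) : Σ i·x_i ≡ 0 (mod n+1)}` satisfies
`μ² < (1/4)(n + 4 log(n-1) + 7 - 4 log 2 + 10/n)`: there is a radius `μ` whose square
is below this bound such that every point of the hyperplane `span_ℝ A_n` is within
distance `μ` of some lattice point. -/
theorem covering_radius_barnes_lattice (n : ℕ) (hn : 2 ≤ n) :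
    ∃ μ : ℝ, 0 ≤ μ ∧
      (∀ ξ : Fin (n + 1) → ℝ, ∑ i : Fin (n + 1), ξ i = 0 →
        ∃ x : Fin (n + 1) → ℤ,
          (∑ i : Fin (n + 1), x i = 0) ∧
          ((((∑ i : Fin (n + 1), ((i : ℕ) + 1 : ℤ) * x i) : ℤ) : ZMod (n + 1)) = 0) ∧
          ∑ i : Fin (n + 1), (ξ i - (x i : ℝ)) ^ 2 ≤ μ ^ 2) ∧
      μ ^ 2 < (1 / 4) * ((n : ℝ) + 4 * Real.log ((n : ℝ) - 1) + 7 -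
        4 * Real.log 2 + 10 / (n : ℝ)) := by
  have hμnn : (0:ℝ) ≤ ((n:ℝ)+1)/4 + 2 := by positivity
  refine ⟨Real.sqrt (((n:ℝ)+1)/4 + 2), Real.sqrt_nonneg _, ?_, ?_⟩
  · intro ξ hξ
    rw [Real.sq_sqrt hμnn]
    obtain ⟨x, hxsum, hxcost⟩ := cover n ξ hξ
    set W : ℤ := ∑ i : Fin (n+1), ((i : ℕ) + 1 : ℤ) * x i with hWdef
    by_cases hW : ((W : ℤ) : ZMod (n+1)) = 0
    · exact ⟨x, hxsum, hW, by linarith⟩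
    · obtain ⟨j, -, hjmax⟩ :=
        Finset.exists_max_image Finset.univ (fun i => ξ i - (x i : ℝ)) Finset.univ_nonempty
      set κ : ZMod (n+1) := ((j : ℕ) : ZMod (n+1)) + (W : ZMod (n+1)) with hκdef
      set k : Fin (n+1) := ⟨κ.val, ZMod.val_lt κ⟩ with hkdef
      have hkκ : ((k : ℕ) : ZMod (n+1)) = κ := by
        exact ZMod.natCast_rightInverse κ
      have hjk : j ≠ k := by
        intro h
        apply hW
        have : ((j : ℕ) : ZMod (n+1)) = κ := by rw [h]; exact hkκ
        rw [hκdef] at this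
        exact left_eq_add.mp this
      refine ⟨fun i => x i + (if i = j then 1 else 0) - (if i = k then 1 else 0), ?_, ?_, ?_⟩
      · simp only [Finset.sum_sub_distrib, Finset.sum_add_distrib, hxsum]
        rw [Finset.sum_ite_eq' Finset.univ j fun _ => (1:ℤ),
            Finset.sum_ite_eq' Finset.univ k fun _ => (1:ℤ)]
        simp
      · have hterm : ∀ i : Fin (n+1), ((i : ℕ) + 1 : ℤ) *
            (x i + (if i = j then 1 else 0) - (if i = k then 1 else 0))
            = ((i : ℕ) + 1 : ℤ) * x i + (if i = j then ((j:ℕ)+1:ℤ) else 0)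
              - (if i = k then ((k:ℕ)+1:ℤ) else 0) := by
          intro i
          by_cases h1 : i = j <;> by_cases h2 : i = k
          · exact absurd (h1.symm.trans h2) hjk
          · subst h1; simp [h2]; ring
          · subst h2; simp [h1]; ring
          · simp [h1, h2]
        rw [Finset.sum_congr rfl fun i _ => hterm i]
        simp only [Finset.sum_sub_distrib, Finset.sum_add_distrib]
        rw [Finset.sum_ite_eq' Finset.univ j fun _ => ((j:ℕ)+1:ℤ),
            Finset.sum_ite_eq' Finset.univ k fun _ => ((k:ℕ)+1:ℤ)]
        simp only [Finset.mem_univ, if_true, ← hWdef]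
        push_cast
        rw [hkκ, hκdef]
        push_cast
        ring
      · have hterm2 : ∀ i : Fin (n+1),
            (ξ i - ((x i + (if i = j then 1 else 0) - (if i = k then 1 else 0) : ℤ) : ℝ))^2
            = (ξ i - (x i : ℝ))^2 + ((if i = j then 1 - 2*(ξ j - (x j : ℝ)) else 0)
              + (if i = k then 1 + 2*(ξ k - (x k : ℝ)) else 0)) := by
          intro i
          by_cases h1 : i = j <;> by_cases h2 : i = k
          · exact absurd (h1.symm.trans h2) hjk
          · subst h1; simp [h2]; push_cast; ring
          · subst h2; simp [h1]; push_cast; ring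
          · simp [h1, h2]
        rw [Finset.sum_congr rfl fun i _ => hterm2 i]
        rw [Finset.sum_add_distrib, Finset.sum_add_distrib]
        rw [Finset.sum_ite_eq' Finset.univ j, Finset.sum_ite_eq' Finset.univ k]
        simp only [Finset.mem_univ, if_true]
        have hek : ξ k - (x k : ℝ) ≤ ξ j - (x j : ℝ) := hjmax k (Finset.mem_univ k)
        linarith
  · rw [Real.sq_sqrt hμnn]
    exact numbound n hn
end

section
/- For every v ∈ A_n there exists x ∈ L(G) with ‖v − x‖ ≤ √2. -/
/-!
Since `g` enumerates the nonzero elements of `G`, either `∑ vᵢ gᵢ = 0` and `x = v` works, or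
`∑ vᵢ gᵢ = g_j` for some `j`; then moving one unit from coordinate `j` to coordinate `n + 1`
keeps the coordinate sum, cancels `g_j`, and moves `v` by squared distance `2`.
-/

open Finset Function

theorem mem_range_of_injective_of_card_eq_succ {ι α : Type*} [Fintype ι] [Fintype α]
    {f : ι → α} (hf : Injective f) {a : α} (ha : ∀ i, f i ≠ a)
    (hcard : Fintype.card α = Fintype.card ι + 1) {b : α} (hb : b ≠ a) : b ∈ Set.range f := by
  classical
  have himage : univ.image f = univ.erase a := by
    refine eq_of_subset_of_card_le (fun x hx => ?_) ?_
    · obtain ⟨i, -, rfl⟩ := mem_image.mp hx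
      exact mem_erase.mpr ⟨ha i, mem_univ _⟩
    · rw [card_image_of_injective _ hf, card_erase_of_mem (mem_univ a), card_univ, card_univ,
        hcard, Nat.add_sub_cancel]
  obtain ⟨i, -, hi⟩ := mem_image.mp (himage ▸ mem_erase.mpr ⟨hb, mem_univ b⟩)
  exact ⟨i, hi⟩

section unitTransfer

variable {ι : Type*} [DecidableEq ι]

def unitTransfer (a b : ι) : ι → ℤ :=
  Pi.single a 1 - Pi.single b 1

theorem unitTransfer_sq {a b : ι} (hab : a ≠ b) (i : ι) :
    unitTransfer a b i ^ 2 = (Pi.single a 1 + Pi.single b 1 : ι → ℤ) i := by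
  by_cases ha : i = a <;> by_cases hb : i = b <;> simp_all [unitTransfer]

variable [Fintype ι]

theorem sum_unitTransfer (a b : ι) : ∑ i, unitTransfer a b i = 0 := by
  simp [unitTransfer]

theorem sum_unitTransfer_sq {a b : ι} (hab : a ≠ b) : ∑ i, unitTransfer a b i ^ 2 = 2 := by
  simp [unitTransfer_sq hab, sum_add_distrib, one_add_one_eq_two]

end unitTransfer

theorem unitTransfer_castSucc_last_apply_castSucc {n : ℕ} (j i : Fin n) :
    unitTransfer j.castSucc (Fin.last n) i.castSucc = (Pi.single j 1 : Fin n → ℤ) i := by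
  simp [unitTransfer, Pi.single_apply, Fin.castSucc_ne_last]

theorem sum_unitTransfer_castSucc_last_smul {n : ℕ} {G : Type*} [AddCommGroup G]
    (g : Fin n → G) (j : Fin n) :
    ∑ i : Fin n, unitTransfer j.castSucc (Fin.last n) i.castSucc • g i = g j := by
  simp [unitTransfer_castSucc_last_apply_castSucc, Pi.single_apply, ite_smul]

/-- For every `v ∈ A_n` there exists `x ∈ L(G)` with `‖v - x‖ ≤ √2`,
i.e. with squared distance at most `2`. -/
theorem exists_lattice_point_close (n : ℕ) (G : Type*) [AddCommGroup G] [Fintype G]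
    (g : Fin n → G) (hinj : Function.Injective g) (h0 : ∀ i, g i ≠ 0)
    (hcard : Fintype.card G = n + 1)
    (v : Fin (n + 1) → ℤ) (hv : ∑ i : Fin (n + 1), v i = 0) :
    ∃ x : Fin (n + 1) → ℤ,
      (∑ i : Fin (n + 1), x i = 0) ∧
      (∑ i : Fin n, x i.castSucc • g i = 0) ∧
      ∑ i : Fin (n + 1), (v i - x i) ^ 2 ≤ 2 := by
  classical
  by_cases hs : ∑ i : Fin n, v i.castSucc • g i = 0
  · exact ⟨v, hv, hs, by simp⟩
  obtain ⟨j, hj⟩ := mem_range_of_injective_of_card_eq_succ hinj h0 (by simpa using hcard) hs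
  refine ⟨v - unitTransfer j.castSucc (Fin.last n), ?_, ?_, ?_⟩
  · simp only [Pi.sub_apply, sum_sub_distrib, hv, sum_unitTransfer, sub_zero]
  · simp only [Pi.sub_apply, sub_smul, sum_sub_distrib, sum_unitTransfer_castSucc_last_smul, hj,
      sub_self]
  · simp only [Pi.sub_apply, sub_sub_cancel, sum_unitTransfer_sq (Fin.castSucc_lt_last j).ne,
      le_refl]
end

section
/- For every finite abelian group G of order n+1, the group Aut(L(G)) ∩ S_n is isomorphic to Aut(G), where S_n acts on L(G) by permuting the first n coordinates (and fixing the last coordinate as the negative sum). -/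
def latticePermGroup (n : ℕ) (G : Type*) [AddCommGroup G] (g : Fin n → G) :
    Subgroup (Equiv.Perm (Fin n)) where
  carrier := {σ | ∀ x : Fin n → ℤ,
    (∑ i, x i • g i = 0) ↔ (∑ i, x (σ i) • g i = 0)}
  one_mem' := by intro x; simp
  mul_mem' := by
    intro σ τ hσ hτ x
    have h1 := hσ x
    have h2 := hτ (fun i => x (σ i))
    simpa [Equiv.Perm.mul_apply] using h1.trans h2
  inv_mem' := by
    intro σ hσ x
    have h := hσ (fun i => x (σ⁻¹ i))
    simpa [Equiv.Perm.inv_def] using h.symm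

/-!
Since `g` enumerates the nonzero elements of `G`, every automorphism of `G` permutes the indices,
which gives an injective homomorphism `Aut(G) → S_n`. Its image is exactly the stabiliser of the
lattice: an automorphism transports the integer relations among the `g i`; conversely, if `σ`
preserves the lattice, then `x ↦ Σ x_i g_i` and `x ↦ Σ x_i g_{σ i}` are surjections `ℤⁿ → G` with
the same kernel, so they differ by an automorphism of `G`.
-/

theorem LinearMap.exists_linearEquiv_comp_eq_of_ker_eq {R M N P : Type*} [Ring R]
    [AddCommGroup M] [AddCommGroup N] [AddCommGroup P] [Module R M] [Module R N] [Module R P]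
    {f : M →ₗ[R] N} {f' : M →ₗ[R] P} (hf : Function.Surjective f)
    (hf' : Function.Surjective f') (h : LinearMap.ker f = LinearMap.ker f') :
    ∃ φ : N ≃ₗ[R] P, ∀ x, φ (f x) = f' x := by
  refine ⟨(f.quotKerEquivOfSurjective hf).symm.trans
    ((Submodule.quotEquivOfEq _ _ h).trans (f'.quotKerEquivOfSurjective hf')), fun x => ?_⟩
  have hx : (f.quotKerEquivOfSurjective hf).symm (f x) = Submodule.Quotient.mk x :=
    (LinearEquiv.symm_apply_eq _).mpr rfl
  simp [hx]

section LinearCombination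

variable {ι G : Type*} [Fintype ι] [AddCommGroup G]

theorem Fintype.linearCombination_comp_perm (g : ι → G) (σ : Equiv.Perm ι) (x : ι → ℤ) :
    Fintype.linearCombination ℤ (g ∘ σ) x = Fintype.linearCombination ℤ g (x ∘ σ.symm) := by
  simp only [Fintype.linearCombination_apply, Function.comp_apply]
  exact (Equiv.sum_comp σ.symm fun i => x i • g (σ i)).symm.trans (by simp)

theorem Fintype.linearCombination_int_surjective {g : ι → G}
    (hg : ∀ a, a ≠ 0 → ∃ i, g i = a) :
    Function.Surjective (Fintype.linearCombination ℤ g) := by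
  classical
  intro a
  by_cases ha : a = 0
  · exact ⟨0, by simp [ha]⟩
  · obtain ⟨i, rfl⟩ := hg a ha
    exact ⟨Pi.single i 1, by simp⟩

end LinearCombination

section LatticePermGroup

variable {n : ℕ} {G : Type*} [AddCommGroup G] {g : Fin n → G} {σ : Equiv.Perm (Fin n)}

theorem mem_latticePermGroup_of_addEquiv (φ : G ≃+ G) (h : ∀ i, φ (g i) = g (σ i)) :
    σ ∈ latticePermGroup n G g := by
  intro x
  have hsum : ∑ i, x (σ i) • g i = φ.symm (∑ i, x i • g i) := by
    rw [map_sum, ← Equiv.sum_comp σ fun i => φ.symm (x i • g i)]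
    refine Finset.sum_congr rfl fun i _ => ?_
    rw [map_zsmul, ← h, AddEquiv.symm_apply_apply]
  rw [hsum, AddEquivClass.map_eq_zero_iff]

theorem exists_addEquiv_of_mem_latticePermGroup (hg : ∀ a, a ≠ 0 → ∃ i, g i = a)
    (hσ : σ ∈ latticePermGroup n G g) : ∃ φ : G ≃+ G, ∀ i, φ (g i) = g (σ i) := by
  classical
  have hker : LinearMap.ker (Fintype.linearCombination ℤ g) =
      LinearMap.ker (Fintype.linearCombination ℤ (g ∘ σ)) := by
    ext x
    rw [LinearMap.mem_ker, LinearMap.mem_ker, Fintype.linearCombination_comp_perm]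
    exact (latticePermGroup n G g).inv_mem hσ x
  have hsurj := Fintype.linearCombination_int_surjective hg
  have hsurj' : Function.Surjective (Fintype.linearCombination ℤ (g ∘ σ)) := fun a => by
    obtain ⟨x, rfl⟩ := hsurj a
    exact ⟨x ∘ σ, by rw [Fintype.linearCombination_comp_perm]; simp [Function.comp_def]⟩
  obtain ⟨φ, hφ⟩ := LinearMap.exists_linearEquiv_comp_eq_of_ker_eq hsurj hsurj' hker
  exact ⟨φ.toAddEquiv, fun i => by simpa using hφ (Pi.single i 1)⟩

end LatticePermGroup

section PermOfAddAut

variable {ι G : Type*} [AddZeroClass G] (e : ι ≃ {a : G // a ≠ 0})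

def permOfAddAut : Multiplicative (AddAut G) →* Equiv.Perm ι :=
  MonoidHom.mk'
    (fun φ => e.symm.permCongr <| Equiv.Perm.subtypePerm (Multiplicative.toAdd φ).toEquiv
      fun _ => EmbeddingLike.map_ne_zero_iff (f := Multiplicative.toAdd φ))
    fun φ ψ => by ext i; simp [Equiv.permCongr_apply]

theorem coe_apply_permOfAddAut (φ : Multiplicative (AddAut G)) (i : ι) :
    (e (permOfAddAut e φ i) : G) = Multiplicative.toAdd φ (e i) := by
  simp [permOfAddAut, Equiv.permCongr_apply]

theorem permOfAddAut_injective : Function.Injective (permOfAddAut e) := by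
  intro φ ψ h
  refine Multiplicative.toAdd.injective (AddEquiv.ext fun a => ?_)
  by_cases ha : a = 0
  · simp only [ha, map_zero]
  · obtain ⟨i, hi⟩ := e.surjective ⟨a, ha⟩
    have := congrArg (fun σ => (e (σ i) : G)) h
    simpa only [coe_apply_permOfAddAut, hi] using this

end PermOfAddAut

theorem range_permOfAddAut {n : ℕ} {G : Type*} [AddCommGroup G] (e : Fin n ≃ {a : G // a ≠ 0}) :
    (permOfAddAut e).range = latticePermGroup n G fun i => e i := by
  ext σ
  constructor
  · rintro ⟨φ, rfl⟩
    exact mem_latticePermGroup_of_addEquiv _ fun i => (coe_apply_permOfAddAut e φ i).symm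
  · intro hσ
    obtain ⟨φ, hφ⟩ := exists_addEquiv_of_mem_latticePermGroup
      (fun a ha => ⟨e.symm ⟨a, ha⟩, by simp⟩) hσ
    refine ⟨Multiplicative.ofAdd φ, Equiv.ext fun i => e.injective (Subtype.ext ?_)⟩
    rw [coe_apply_permOfAddAut]
    exact hφ i

theorem bijective_subtype_ne_zero_of_card_eq_succ {n : ℕ} {G : Type*} [Zero G] [Fintype G]
    {g : Fin n → G} (hinj : Function.Injective g) (h0 : ∀ i, g i ≠ 0)
    (hcard : Fintype.card G = n + 1) :
    Function.Bijective fun i => (⟨g i, h0 i⟩ : {a : G // a ≠ 0}) := by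
  classical
  refine (Fintype.bijective_iff_injective_and_card _).mpr
    ⟨fun i j hij => hinj (congrArg Subtype.val hij), ?_⟩
  rw [Fintype.card_fin, Fintype.card_subtype_compl, Fintype.card_subtype_eq, hcard,
    Nat.add_sub_cancel]

/-- For every finite abelian group `G` of order `n+1`, the group
`Aut(L(G)) ∩ S_n` of coordinate permutations preserving `L(G)` is isomorphic to
`Aut(G)`. -/
theorem aut_lattice_cap_perms_iso_aut (n : ℕ) (G : Type*) [AddCommGroup G] [Fintype G]
    (g : Fin n → G) (hinj : Function.Injective g) (h0 : ∀ i, g i ≠ 0)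
    (hcard : Fintype.card G = n + 1) :
    Nonempty ((latticePermGroup n G g) ≃* Multiplicative (AddAut G)) := by
  let e := Equiv.ofBijective _ (bijective_subtype_ne_zero_of_card_eq_succ hinj h0 hcard)
  exact ⟨(MulEquiv.subgroupCongr (range_permOfAddAut e).symm).trans
    (MonoidHom.ofInjective (permOfAddAut_injective e)).symm⟩
end

section
/- If σ ∈ S_n is a permutation such that the induced coordinate permutation maps L(G) into itself, then the map g_i ↦ g_{σ(i)}, 0 ↦ 0 is a group automorphism of G. -/
/-- If `σ ∈ S_n` is a permutation such that the induced coordinate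
permutation `x ↦ x ∘ σ` maps `L(G)` into itself, then the map `g_i ↦ g_{σ(i)}`,
`0 ↦ 0` is a group automorphism of `G`. -/
theorem perm_preserving_lattice_induces_group_aut
    (n : ℕ) (G : Type*) [AddCommGroup G] [Fintype G]
    (g : Fin n → G) (hinj : Function.Injective g) (h0 : ∀ i, g i ≠ 0)
    (hcard : Fintype.card G = n + 1)
    (σ : Equiv.Perm (Fin n))
    (hσ : ∀ x : Fin n → ℤ, (∑ i, x i • g i = 0) → (∑ i, x (σ i) • g i = 0)) :
    ∃ e : G ≃+ G, ∀ i, e (g i) = g (σ i) := by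
  classical
  -- key additivity transfer
  have hadd : ∀ i j k : Fin n, g i + g j = g k →
      g (σ⁻¹ i) + g (σ⁻¹ j) = g (σ⁻¹ k) := by
    intro i j k h
    have hx : ∑ t, ((if t = i then (1:ℤ) else 0) + (if t = j then 1 else 0)
        - (if t = k then 1 else 0)) • g t = 0 := by
      simp only [add_smul, sub_smul, ite_smul, one_smul, zero_smul,
        Finset.sum_sub_distrib, Finset.sum_add_distrib, Finset.sum_ite_eq',
        Finset.mem_univ, if_true]
      rw [h, sub_self]
    have h2 := hσ _ hx
    simp only [Equiv.apply_eq_iff_eq_symm_apply, add_smul, sub_smul, ite_smul,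
      one_smul, zero_smul, Finset.sum_sub_distrib, Finset.sum_add_distrib,
      Finset.sum_ite_eq', Finset.mem_univ, if_true] at h2
    simp only [Equiv.Perm.inv_def]
    linear_combination (norm := abel) h2
  have hneg : ∀ i j : Fin n, g i + g j = 0 → g (σ⁻¹ i) + g (σ⁻¹ j) = 0 := by
    intro i j h
    have hx : ∑ t, ((if t = i then (1:ℤ) else 0) + (if t = j then 1 else 0)) • g t = 0 := by
      simp only [add_smul, ite_smul, one_smul, zero_smul,
        Finset.sum_add_distrib, Finset.sum_ite_eq', Finset.mem_univ, if_true]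
      exact h
    have h2 := hσ _ hx
    simp only [Equiv.apply_eq_iff_eq_symm_apply, add_smul, ite_smul,
      one_smul, zero_smul, Finset.sum_add_distrib,
      Finset.sum_ite_eq', Finset.mem_univ, if_true] at h2
    simpa [Equiv.Perm.inv_def] using h2
  -- surjectivity of g onto nonzero elements
  have hsurj : ∀ a : G, a ≠ 0 → ∃ i, g i = a := by
    intro a ha
    have hb : Function.Bijective (fun i : Fin n => (⟨g i, h0 i⟩ : {x : G // x ≠ 0})) := by
      rw [Fintype.bijective_iff_injective_and_card]
      constructor
      · intro i j hij
        exact hinj (congrArg Subtype.val hij)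
      · simp [Fintype.card_subtype_compl, hcard]
    obtain ⟨i, hi⟩ := hb.2 ⟨a, ha⟩
    exact ⟨i, congrArg Subtype.val hi⟩
  have idx : ∀ a : G, a ≠ 0 → {i : Fin n // g i = a} := fun a ha =>
    ⟨(hsurj a ha).choose, (hsurj a ha).choose_spec⟩
  set f : G → G := fun a => if h : a = 0 then 0 else g (σ⁻¹ (idx a h).1) with hf
  have f0 : f 0 = 0 := by simp [hf]
  have fg : ∀ i, f (g i) = g (σ⁻¹ i) := by
    intro i
    have : (idx (g i) (h0 i)).1 = i := hinj (idx (g i) (h0 i)).2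
    simp [hf, h0 i, this]
  have fne : ∀ a : G, a ≠ 0 → f a ≠ 0 := by
    intro a ha
    simp only [hf, dif_neg ha]
    exact h0 _
  have fadd : ∀ a b : G, f (a + b) = f a + f b := by
    intro a b
    by_cases ha : a = 0
    · simp [ha, f0]
    by_cases hb : b = 0
    · simp [hb, f0]
    obtain ⟨i, hi⟩ := hsurj a ha
    obtain ⟨j, hj⟩ := hsurj b hb
    by_cases hab : a + b = 0
    · rw [hab, f0, ← hi, ← hj, fg, fg]
      exact (hneg i j (by rw [hi, hj, hab])).symm
    · obtain ⟨k, hk⟩ := hsurj _ hab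
      rw [← hk, ← hi, ← hj, fg, fg, fg]
      exact (hadd i j k (by rw [hi, hj, hk])).symm
  have finj : Function.Injective f := by
    intro a b hab
    by_cases ha : a = 0 <;> by_cases hb : b = 0
    · rw [ha, hb]
    · exact absurd (hab.symm.trans (by rw [ha, f0])) (fne b hb)
    · exact absurd (hab.trans (by rw [hb, f0])) (fne a ha)
    · obtain ⟨i, hi⟩ := hsurj a ha
      obtain ⟨j, hj⟩ := hsurj b hb
      rw [← hi, ← hj, fg, fg] at hab
      rw [← hi, ← hj, σ⁻¹.injective (hinj hab)]
  have fbij : Function.Bijective f := Finite.injective_iff_bijective.mp finj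
  let F : G ≃+ G := AddEquiv.mk' (Equiv.ofBijective f fbij) fadd
  refine ⟨F.symm, fun i => ?_⟩
  have : F (g (σ i)) = g i := by
    show f (g (σ i)) = g i
    rw [fg]; simp
  rw [← this, AddEquiv.symm_apply_apply]
end

section
/- Let b_1, ..., b_n span a rank-n lattice, let L_k be the lattice spanned by b_1, ..., b_k, and let V_k be the k-dimensional volume of the parallelepiped spanned by b_1,...,b_k (V_k = sqrt(det Gram(b_1,...,b_k))). If every point of span_R L_k is within distance r_k of L_k, then every point of span_R L_{k+1} is within distance r_{k+1} of L_{k+1}, where r_{k+1}² ≤ r_k² + (V_{k+1}/(2V_k))². -/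
/-!
Let `w` be the orthogonal projection of `b_{k+1}` onto `span_ℝ L_k` and `g = b_{k+1} - w`.
Expressing `w` in terms of `b_1, …, b_k` shows that the Gram matrix of `b_1, …, b_k, b_{k+1}` is
congruent, by a unitriangular matrix, to that of `b_1, …, b_k, g`, which is block diagonal; hence
`V_{k+1} = V_k ‖g‖`. Given `ξ = η + t b_{k+1}` with `η ∈ span_ℝ L_k`, round `t` to the nearest
integer `q` and put `s = t - q`, so `|s| ≤ 1/2`. Covering `η + s w ∈ span_ℝ L_k` by `p ∈ L_k`,
the difference `ξ - (p + q b_{k+1}) = (η + s w - p) + s g` is a sum of orthogonal vectors of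
lengths at most `r` and `‖g‖ / 2`.
-/

open Matrix Submodule
open scoped InnerProductSpace

namespace Matrix

variable {𝕜 E : Type*} [RCLike 𝕜] [NormedAddCommGroup E] [InnerProductSpace 𝕜 E]

theorem gram_sum_smul {ι κ : Type*} [Fintype ι] (u : ι → E) (A : Matrix ι κ 𝕜) :
    gram 𝕜 (fun j => ∑ i, A i j • u i) = Aᴴ * gram 𝕜 u * A := by
  ext j j'
  simp only [gram_apply, sum_inner, inner_sum, inner_smul_left, inner_smul_right, mul_apply,
    conjTranspose_apply, Finset.sum_mul, Finset.mul_sum, RCLike.star_def]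
  refine Finset.sum_congr rfl fun i _ => Finset.sum_congr rfl fun i' _ => ?_
  ring

theorem det_gram_snoc_of_orthogonal {k : ℕ} (f : Fin k → E) {g : E}
    (hg : ∀ i, ⟪f i, g⟫_𝕜 = 0) :
    (gram 𝕜 (Fin.snoc f g : Fin (k + 1) → E)).det = (gram 𝕜 f).det * (‖g‖ : 𝕜) ^ 2 := by
  have hsub : (gram 𝕜 (Fin.snoc f g : Fin (k + 1) → E)).submatrix Fin.castSucc Fin.castSucc =
      gram 𝕜 f := by
    ext i j
    simp [gram_apply]
  have hrow : ∀ j : Fin k,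
      gram 𝕜 (Fin.snoc f g : Fin (k + 1) → E) (Fin.last k) j.castSucc = 0 := fun j => by
    simpa [gram_apply] using inner_eq_zero_symm.1 (hg j)
  rw [det_succ_row _ (Fin.last k), Fin.sum_univ_castSucc]
  simp only [hrow, mul_zero, zero_mul, Finset.sum_const_zero, zero_add, Fin.succAbove_last, hsub,
    gram_apply, Fin.snoc_last, inner_self_eq_norm_sq_to_K, Even.neg_one_pow ⟨_, rfl⟩, one_mul]
  exact mul_comm _ _

theorem det_gram_snoc {k : ℕ} (f : Fin k → E) {v w : E}
    (hw : w ∈ span 𝕜 (Set.range f)) (hvw : v - w ∈ (span 𝕜 (Set.range f))ᗮ) :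
    (gram 𝕜 (Fin.snoc f v : Fin (k + 1) → E)).det = (gram 𝕜 f).det * (‖v - w‖ : 𝕜) ^ 2 := by
  obtain ⟨c, rfl⟩ := mem_span_range_iff_exists_fun 𝕜 |>.1 hw
  set A : Matrix (Fin (k + 1)) (Fin (k + 1)) 𝕜 := updateCol 1 (Fin.last k) (Fin.snoc c 1)
  have hA : A.det = 1 := by
    have htri : A.IsUpperTriangular := fun i j (hji : j < i) => by
      simp [A, (hji.trans_le (Fin.le_last i)).ne, one_apply_ne hji.ne']
    rw [det_of_isUpperTriangular htri]
    refine Finset.prod_eq_one fun i _ => Fin.lastCases ?_ (fun i => ?_) i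
    · simp [A]
    · simp [A, (Fin.castSucc_lt_last i).ne]
  have hcomb : (Fin.snoc f v : Fin (k + 1) → E) =
      fun j => ∑ i, A i j • (Fin.snoc f (v - ∑ i, c i • f i) : Fin (k + 1) → E) i := by
    funext j
    refine Fin.lastCases ?_ (fun j => ?_) j
    · simp [A, Fin.sum_univ_castSucc]
    · simp [A, one_apply]
  rw [hcomb, gram_sum_smul, det_mul, det_mul, det_conjTranspose, hA, star_one, one_mul, mul_one,
    det_gram_snoc_of_orthogonal]
  exact fun i => inner_right_of_mem_orthogonal (subset_span (Set.mem_range_self i)) hvw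

end Matrix

theorem exists_dist_le_of_mem_span_insert {F : Type*} [NormedAddCommGroup F]
    [InnerProductSpace ℝ F] {S : Set F} {r : ℝ}
    (hcov : ∀ ξ ∈ span ℝ S, ∃ p ∈ span ℤ S, dist ξ p ≤ r)
    {v w : F} (hw : w ∈ span ℝ S) (hvw : v - w ∈ (span ℝ S)ᗮ) :
    ∀ ξ ∈ span ℝ (insert v S), ∃ p ∈ span ℤ (insert v S),
      dist ξ p ≤ √(r ^ 2 + (‖v - w‖ / 2) ^ 2) := by
  intro ξ hξ
  obtain ⟨t, η, hη, rfl⟩ := mem_span_insert.1 hξ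
  set s := t - round t
  have hη' : η + s • w ∈ span ℝ S := add_mem hη (smul_mem _ s hw)
  obtain ⟨p, hpS, hp⟩ := hcov _ hη'
  have hpR : p ∈ span ℝ S := span_le_restrictScalars ℤ ℝ S hpS
  refine ⟨p + round t • v, add_mem (span_mono (Set.subset_insert v S) hpS)
    (zsmul_mem (subset_span (Set.mem_insert v S)) _), ?_⟩
  have hsplit : t • v + η - (p + round t • v) = (η + s • w - p) + s • (v - w) := by
    simp only [s, sub_smul, smul_sub, ← Int.cast_smul_eq_zsmul ℝ]
    abel
  have horth : ⟪η + s • w - p, s • (v - w)⟫_ℝ = 0 :=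
    inner_right_of_mem_orthogonal (sub_mem hη' hpR) (smul_mem _ s hvw)
  have hs : |s| ≤ 1 / 2 := abs_sub_round t
  rw [dist_eq_norm, hsplit, Real.le_sqrt (norm_nonneg _) (by positivity),
    norm_add_sq_real, horth, mul_zero, add_zero]
  have hlattice : ‖η + s • w - p‖ ≤ r := by rwa [← dist_eq_norm]
  have hrounding : ‖s • (v - w)‖ ≤ ‖v - w‖ / 2 := by
    rw [norm_smul, Real.norm_eq_abs]
    linarith [mul_le_mul_of_nonneg_right hs (norm_nonneg (v - w))]
  gcongr

/-- Let `b_1, ..., b_n` be linearly independent vectors in `ℝ^m`, let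
`L_k` be the (ℤ-)lattice spanned by `b_1, ..., b_k` and `V_k = √(det Gram(b_1,...,b_k))`
the `k`-dimensional volume of the parallelepiped they span. If every point of
`span_ℝ L_k` is within distance `r` of `L_k`, then every point of `span_ℝ L_{k+1}` is
within distance `r'` of `L_{k+1}`, where `r'² ≤ r² + (V_{k+1}/(2 V_k))²`
(we take `r' = √(r² + (V_{k+1}/(2 V_k))²)`). -/
theorem covering_radius_inductive_step (m n : ℕ)
    (b : Fin n → EuclideanSpace ℝ (Fin m)) (hb : LinearIndependent ℝ b)
    (k : ℕ) (hk : k + 1 ≤ n) (r : ℝ)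
    (V : ℕ → ℝ)
    (hV : ∀ l : ℕ, ∀ hl : l ≤ n, V l =
      Real.sqrt (Matrix.det (Matrix.of fun i j : Fin l =>
        (inner ℝ (b (Fin.castLE hl i)) (b (Fin.castLE hl j)) : ℝ))))
    (hcov : ∀ ξ ∈ Submodule.span ℝ
        (Set.range fun i : Fin k => b (Fin.castLE (by omega) i)),
      ∃ p ∈ Submodule.span ℤ
        (Set.range fun i : Fin k => b (Fin.castLE (by omega) i)),
        dist ξ p ≤ r) :
    ∀ ξ ∈ Submodule.span ℝ
        (Set.range fun i : Fin (k + 1) => b (Fin.castLE hk i)),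
      ∃ p ∈ Submodule.span ℤ
        (Set.range fun i : Fin (k + 1) => b (Fin.castLE hk i)),
        dist ξ p ≤ Real.sqrt (r ^ 2 + (V (k + 1) / (2 * V k)) ^ 2) := by
  set c : Fin k → EuclideanSpace ℝ (Fin m) := fun i => b (Fin.castLE (by omega) i)
  set P := span ℝ (Set.range c)
  set v := b (Fin.castLE hk (Fin.last k))
  obtain ⟨w, hw, hvw⟩ : ∃ w ∈ P, v - w ∈ Pᗮ :=
    ⟨_, P.starProjection_apply_mem v, P.sub_starProjection_mem_orthogonal v⟩
  have hsnoc : (fun i : Fin (k + 1) => b (Fin.castLE hk i)) = Fin.snoc c v := by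
    funext i
    refine Fin.lastCases ?_ (fun i => ?_) i <;> simp [c, v]
  have hVk : 0 < V k := by
    rw [hV k (by omega)]
    exact Real.sqrt_pos.2
      (posDef_gram_of_linearIndependent (hb.comp _ (Fin.castLE_injective _))).det_pos
  have hVsucc : V (k + 1) = V k * ‖v - w‖ := by
    rw [hV (k + 1) hk, hV k (by omega)]
    change √(gram ℝ _).det = √(gram ℝ c).det * _
    rw [hsnoc, det_gram_snoc c hw hvw]
    simp
  have hratio : V (k + 1) / (2 * V k) = ‖v - w‖ / 2 := by
    rw [hVsucc]
    field_simp
  rw [hsnoc, Fin.range_snoc, hratio]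
  exact exists_dist_le_of_mem_span_insert hcov hw hvw
end
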